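/- arXiv:2001.04595 — 4 statements merged into one kernel-verified Lean document; each statement's English description precedes it below -/
import Mathlib

section
/- Let s ≥ 2 be an integer, 0 < δ ≤ 1, and let c_s > 0 be a constant such that ‖fg‖_{H^s} ≤ c_s (‖f‖_{H^s}‖g‖_{H¹} + ‖f‖_{H¹}‖g‖_{H^s}) for all f, g smooth with all derivatives in L²(ℝ). Then for all u, v smooth with all derivatives in L²(ℝ), ‖uv‖_{(δ,s)} ≤ 18 c_s ‖u‖_{(δ,s)} ‖v‖_{(δ,s)}. -/
open MeasureTheory Filter
open scoped ENNReal Topology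

noncomputable section
namespace GCH

/-- The `L²(ℝ)` norm of a real-valued function. -/
def L2Norm (f : ℝ → ℝ) : ℝ := (eLpNorm f 2 volume).toReal

/-- `f` is smooth and all of its derivatives are in `L²(ℝ)`. -/
def AllDerivL2 (f : ℝ → ℝ) : Prop :=
  ContDiff ℝ (⊤ : ℕ∞) f ∧ ∀ k : ℕ, MemLp (iteratedDeriv k f) 2 volume

/-- The Sobolev `H^s` norm, `‖f‖_{H^s}² = Σ_{j=0}^s binom(s,j) ‖f^{(j)}‖_{L²}²`. -/
def HNorm (s : ℕ) (f : ℝ → ℝ) : ℝ :=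
  Real.sqrt (∑ j ∈ Finset.range (s + 1), (s.choose j : ℝ) * (L2Norm (iteratedDeriv j f)) ^ 2)

/-- `‖f‖_{(δ,s)} = sup_{k ≥ 0} δ^k (k+1)² ‖f^{(k)}‖_{H^s} / k!`, as an extended real number. -/
def ENorm (δ : ℝ) (s : ℕ) (f : ℝ → ℝ) : ℝ≥0∞ :=
  ⨆ k : ℕ, ENNReal.ofReal (δ ^ k * ((k : ℝ) + 1) ^ 2 * HNorm s (iteratedDeriv k f) / (k.factorial : ℝ))

/-- The strip `S(r) = {x + iy : |y| < r}`. -/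
def Strip (r : ℝ) : Set ℂ := {z | |z.im| < r}

/-- `f ∈ A(r)`: `f` admits a holomorphic extension to `S(r)` lying in `L²(S(r'))`
for every `0 < r' < r`. -/
def MemA (r : ℝ) (f : ℝ → ℝ) : Prop :=
  ∃ F : ℂ → ℂ, (∀ x : ℝ, F x = f x) ∧ DifferentiableOn ℂ F (Strip r) ∧
    ∀ r' : ℝ, 0 < r' → r' < r → MemLp F 2 (volume.restrict (Strip r'))

/-- `Λ⁻² = (1 - ∂_x²)⁻¹`, given by convolution with `e^{-|x|}/2`. -/
def lam2inv (f : ℝ → ℝ) : ℝ → ℝ := fun x => (1 / 2) * ∫ y : ℝ, Real.exp (-|x - y|) * f y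

/-- `F₁(u,v) = -β u u_x - Λ⁻²∂_x[-α u + ((3-β)/2)u² + (β/2)u_x² + v + (1/2)v²]`. -/
def F1 (α β : ℝ) (u v : ℝ → ℝ) : ℝ → ℝ := fun x =>
  -β * u x * deriv u x -
    lam2inv (deriv fun y =>
      -α * u y + (3 - β) / 2 * u y ^ 2 + β / 2 * (deriv u y) ^ 2 + v y + 1 / 2 * v y ^ 2) x

/-- `F₂(u,v) = -u_x - (uv)_x`. -/
def F2 (u v : ℝ → ℝ) : ℝ → ℝ := fun x => -(deriv u x) - deriv (fun y => u y * v y) x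

/-- The `L²` inner product. -/
def L2Inner (f g : ℝ → ℝ) : ℝ := ∫ x : ℝ, f x * g x

/-- The `H²` inner product `⟨f,g⟩ + 2⟨f',g'⟩ + ⟨f'',g''⟩`. -/
def H2Inner (f g : ℝ → ℝ) : ℝ :=
  L2Inner f g + 2 * L2Inner (deriv f) (deriv g) +
    L2Inner (iteratedDeriv 2 f) (iteratedDeriv 2 g)

/-- `Φ^{(1)}_{σ,m}(u) = (1/2) Σ_{j=1}^{m+1} e^{2(j-1)σ} ‖u^{(j)}‖_{H²}² / (j!)²`. -/
def Phi1 (σ : ℝ) (m : ℕ) (u : ℝ → ℝ) : ℝ :=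
  (1 / 2) * ∑ j ∈ Finset.Icc 1 (m + 1),
    Real.exp (2 * ((j : ℝ) - 1) * σ) / ((j.factorial : ℝ)) ^ 2 * HNorm 2 (iteratedDeriv j u) ^ 2

/-- `Φ^{(2)}_{σ,m}(v) = (1/2) Σ_{j=0}^{m} e^{2jσ} ‖v^{(j)}‖_{H²}² / (j!)²`. -/
def Phi2 (σ : ℝ) (m : ℕ) (v : ℝ → ℝ) : ℝ :=
  (1 / 2) * ∑ j ∈ Finset.range (m + 1),
    Real.exp (2 * (j : ℝ) * σ) / ((j.factorial : ℝ)) ^ 2 * HNorm 2 (iteratedDeriv j v) ^ 2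

/-- `Φ_{σ,m}(u,v)`. -/
def Phi (σ : ℝ) (m : ℕ) (u v : ℝ → ℝ) : ℝ := Phi1 σ m u + Phi2 σ m v

/-- `∂_σ Φ^{(1)}_{σ,m}(u)`. -/
def dPhi1 (σ : ℝ) (m : ℕ) (u : ℝ → ℝ) : ℝ :=
  ∑ j ∈ Finset.Icc 2 (m + 1),
    ((j : ℝ) - 1) * Real.exp (2 * ((j : ℝ) - 1) * σ) / ((j.factorial : ℝ)) ^ 2 *
      HNorm 2 (iteratedDeriv j u) ^ 2

/-- `∂_σ Φ^{(2)}_{σ,m}(v)`. -/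
def dPhi2 (σ : ℝ) (m : ℕ) (v : ℝ → ℝ) : ℝ :=
  ∑ j ∈ Finset.Icc 1 m,
    (j : ℝ) * Real.exp (2 * (j : ℝ) * σ) / ((j.factorial : ℝ)) ^ 2 *
      HNorm 2 (iteratedDeriv j v) ^ 2

/-- `∂_σ Φ_{σ,m}(u,v)`. -/
def dPhi (σ : ℝ) (m : ℕ) (u v : ℝ → ℝ) : ℝ := dPhi1 σ m u + dPhi2 σ m v

/- ## helper lemmas -/

lemma contDiff_top_deriv {f : ℝ → ℝ} (hf : ContDiff ℝ (⊤ : ℕ∞) f) : ContDiff ℝ (⊤ : ℕ∞) (deriv f) := by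
  have h := contDiff_infty_iff_deriv.mp hf
  exact h.2

lemma contDiff_top_iteratedDeriv {f : ℝ → ℝ} (hf : ContDiff ℝ (⊤ : ℕ∞) f) (n : ℕ) :
    ContDiff ℝ (⊤ : ℕ∞) (iteratedDeriv n f) := by
  induction n with
  | zero => simpa using hf
  | succ n ih => rw [iteratedDeriv_succ]; exact contDiff_top_deriv ih

lemma iteratedDeriv_add' {f g : ℝ → ℝ} (hf : ContDiff ℝ (⊤ : ℕ∞) f) (hg : ContDiff ℝ (⊤ : ℕ∞) g) (n : ℕ) :
    iteratedDeriv n (fun x => f x + g x) = fun x => iteratedDeriv n f x + iteratedDeriv n g x := by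
  funext x
  have h : iteratedDerivWithin n (fun x => f x + g x) Set.univ x = _ := iteratedDerivWithin_add (Set.mem_univ x) uniqueDiffOn_univ
    ((hf.of_le (by exact_mod_cast le_top)).contDiffWithinAt (n := (n : ℕ∞))) ((hg.of_le (by exact_mod_cast le_top)).contDiffWithinAt (n := (n : ℕ∞)))
  simpa [iteratedDerivWithin_univ] using h

lemma iteratedDeriv_cmul {f : ℝ → ℝ} (hf : ContDiff ℝ (⊤ : ℕ∞) f) (C : ℝ) (n : ℕ) :
    iteratedDeriv n (fun x => C * f x) = fun x => C * iteratedDeriv n f x := by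
  funext x
  have h := iteratedDerivWithin_const_mul (Set.mem_univ x) uniqueDiffOn_univ C
    ((hf.of_le (by exact_mod_cast le_top)).contDiffWithinAt (n := (n : ℕ∞)))
  simpa [iteratedDerivWithin_univ] using h

lemma binom_sum (n : ℕ) (p q : ℕ → ℝ) :
    ∑ j ∈ Finset.range (n + 2), (((n+1).choose j : ℝ)) * (p j * q (n + 1 - j))
      = ∑ j ∈ Finset.range (n + 1), ((n.choose j : ℝ)) *
          (p (j+1) * q (n - j) + p j * q (n - j + 1)) := by
  rw [Finset.sum_range_succ' (fun j => (((n+1).choose j : ℝ)) * (p j * q (n + 1 - j))) (n+1)]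
  have h1 : ∀ j ∈ Finset.range (n+1), (((n+1).choose (j+1) : ℝ)) * (p (j+1) * q (n + 1 - (j+1)))
      = ((n.choose j : ℝ)) * (p (j+1) * q (n - j))
        + ((n.choose (j+1) : ℝ)) * (p (j+1) * q (n - j)) := by
    intro j hj
    rw [Nat.succ_sub_succ, Nat.choose_succ_succ]
    push_cast; ring
  rw [Finset.sum_congr rfl h1, Finset.sum_add_distrib]
  have h2 : ∀ j ∈ Finset.range (n+1), ((n.choose j : ℝ)) *
        (p (j+1) * q (n - j) + p j * q (n - j + 1))
      = ((n.choose j : ℝ)) * (p (j+1) * q (n - j))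
        + ((n.choose j : ℝ)) * (p j * q (n - j + 1)) := fun j _ => by ring
  rw [Finset.sum_congr rfl h2, Finset.sum_add_distrib]
  have h3 : ∑ j ∈ Finset.range (n+1), ((n.choose (j+1) : ℝ)) * (p (j+1) * q (n - j))
        + (((n+1).choose 0 : ℝ)) * (p 0 * q (n + 1 - 0))
      = ∑ j ∈ Finset.range (n+1), ((n.choose j : ℝ)) * (p j * q (n - j + 1)) := by
    rw [Finset.sum_range_succ' (fun j => ((n.choose j : ℝ)) * (p j * q (n - j + 1))) n]
    rw [Finset.sum_range_succ]
    have e1 : ∀ j ∈ Finset.range n, ((n.choose (j+1) : ℝ)) * (p (j+1) * q (n - j))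
        = ((n.choose (j+1) : ℝ)) * (p (j+1) * q (n - (j+1) + 1)) := by
      intro j hj
      have hj' : j < n := Finset.mem_range.mp hj
      have he : n - j = n - (j+1) + 1 := by omega
      rw [he]
    rw [Finset.sum_congr rfl e1]
    simp [Nat.choose_succ_self]
  linarith [h3]

lemma iteratedDeriv_mul' {f g : ℝ → ℝ} (hf : ContDiff ℝ (⊤ : ℕ∞) f) (hg : ContDiff ℝ (⊤ : ℕ∞) g) (n : ℕ) :
    iteratedDeriv n (fun x => f x * g x) = fun x =>
      ∑ j ∈ Finset.range (n + 1), (n.choose j : ℝ) *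
        (iteratedDeriv j f x * iteratedDeriv (n - j) g x) := by
  induction n with
  | zero => funext x; simp
  | succ n ih =>
    funext x
    have hdf : ∀ m, Differentiable ℝ (iteratedDeriv m f) := fun m =>
      (contDiff_top_iteratedDeriv hf m).differentiable (by simp)
    have hdg : ∀ m, Differentiable ℝ (iteratedDeriv m g) := fun m =>
      (contDiff_top_iteratedDeriv hg m).differentiable (by simp)
    rw [iteratedDeriv_succ, ih]
    rw [deriv_fun_sum (A := fun j x => (n.choose j : ℝ) * (iteratedDeriv j f x * iteratedDeriv (n - j) g x)) (fun j _ => (((hdf j).mul (hdg (n - j))).const_mul ((n.choose j : ℝ))).differentiableAt)]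
    have h1 : ∀ j ∈ Finset.range (n+1),
        deriv (fun x => (n.choose j : ℝ) * (iteratedDeriv j f x * iteratedDeriv (n - j) g x)) x
        = (n.choose j : ℝ) * (iteratedDeriv (j+1) f x * iteratedDeriv (n - j) g x
            + iteratedDeriv j f x * iteratedDeriv (n - j + 1) g x) := by
      intro j _
      rw [deriv_const_mul (d := fun y => iteratedDeriv j f y * iteratedDeriv (n - j) g y) _ (((hdf j).mul (hdg (n - j))) x)]
      rw [deriv_fun_mul ((hdf j) x) ((hdg (n - j)) x)]
      rw [← iteratedDeriv_succ, ← iteratedDeriv_succ]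
    rw [Finset.sum_congr rfl h1]
    exact (binom_sum n (fun m => iteratedDeriv m f x) (fun m => iteratedDeriv m g x)).symm


lemma AllDerivL2.deriv' {f : ℝ → ℝ} (hf : AllDerivL2 f) : AllDerivL2 (deriv f) := by
  refine ⟨contDiff_top_deriv hf.1, fun k => ?_⟩
  rw [← iteratedDeriv_succ']
  exact hf.2 (k+1)

lemma AllDerivL2.iter {f : ℝ → ℝ} (hf : AllDerivL2 f) (n : ℕ) :
    AllDerivL2 (iteratedDeriv n f) := by
  induction n with
  | zero => simpa using hf
  | succ n ih => rw [iteratedDeriv_succ]; exact ih.deriv'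

lemma AllDerivL2.add' {f g : ℝ → ℝ} (hf : AllDerivL2 f) (hg : AllDerivL2 g) :
    AllDerivL2 (fun x => f x + g x) := by
  refine ⟨hf.1.add hg.1, fun k => ?_⟩
  rw [iteratedDeriv_add' hf.1 hg.1]
  exact (hf.2 k).add (hg.2 k)

lemma AllDerivL2.cmul {f : ℝ → ℝ} (hf : AllDerivL2 f) (C : ℝ) :
    AllDerivL2 (fun x => C * f x) := by
  refine ⟨(contDiff_const (c := C)).mul hf.1, fun k => ?_⟩
  rw [iteratedDeriv_cmul hf.1 C]
  exact (hf.2 k).const_mul C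

lemma AllDerivL2.bounded {f : ℝ → ℝ} (hf : AllDerivL2 f) : ∃ M, ∀ x, |f x| ≤ M := by
  have hf0 : MemLp f 2 volume := by simpa using hf.2 0
  have hf1 : MemLp (deriv f) 2 volume := by
    have := hf.2 1
    rwa [iteratedDeriv_one] at this
  have hcont : Continuous f := hf.1.continuous
  have hdiff : Differentiable ℝ f := hf.1.differentiable (by simp)
  have hcont' : Continuous (deriv f) := (contDiff_top_deriv hf.1).continuous
  have hD : ∀ x, HasDerivAt (fun y => f y ^ 2) (2 * f x * deriv f x) x := by
    intro x
    have h := (hdiff x).hasDerivAt.fun_pow 2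
    simpa [mul_comm, mul_assoc, mul_left_comm] using h
  have hint : Integrable (fun x => 2 * f x * deriv f x) volume := by
    refine Integrable.mono' (hf0.integrable_sq.add hf1.integrable_sq)
      ((continuous_const.mul hcont).mul hcont').aestronglyMeasurable ?_
    refine Eventually.of_forall fun x => ?_
    have h1 : |2 * f x * deriv f x| = 2 * (|f x| * |deriv f x|) := by
      rw [abs_mul, abs_mul]; simp [mul_assoc]
    have h2 : 2 * (|f x| * |deriv f x|) ≤ |f x| ^ 2 + |deriv f x| ^ 2 := by
      nlinarith [sq_nonneg (|f x| - |deriv f x|)]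
    rw [Real.norm_eq_abs, h1]
    calc 2 * (|f x| * |deriv f x|) ≤ |f x| ^ 2 + |deriv f x| ^ 2 := h2
      _ = f x ^ 2 + deriv f x ^ 2 := by rw [sq_abs, sq_abs]
  set I := ∫ x, |2 * f x * deriv f x| with hIdef
  have hI : 0 ≤ I := integral_nonneg fun x => abs_nonneg _
  have key : ∀ x, f x ^ 2 ≤ f 0 ^ 2 + I := by
    intro x
    have hFTC : ∫ t in (0:ℝ)..x, (2 * f t * deriv f t) = f x ^ 2 - f 0 ^ 2 :=
      intervalIntegral.integral_eq_sub_of_hasDerivAt (fun t _ => hD t) hint.intervalIntegrable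
    have h2 : |∫ t in (0:ℝ)..x, (2 * f t * deriv f t)| ≤ I := by
      have h3 : |∫ t in (0:ℝ)..x, (2 * f t * deriv f t)|
          ≤ ∫ t in Set.uIoc (0:ℝ) x, |2 * f t * deriv f t| := by
        simpa only [Real.norm_eq_abs] using
          intervalIntegral.norm_integral_le_integral_norm_uIoc
            (a := (0:ℝ)) (b := x) (f := fun t => 2 * f t * deriv f t) (μ := volume)
      refine h3.trans ?_
      exact setIntegral_le_integral hint.abs (Eventually.of_forall fun t => abs_nonneg _)
    have := (abs_le.mp h2).2
    rw [hFTC] at this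
    linarith
  refine ⟨Real.sqrt (f 0 ^ 2 + I), fun x => ?_⟩
  rw [← Real.sqrt_sq_eq_abs]
  exact Real.sqrt_le_sqrt (key x)

lemma AllDerivL2.memTop {f : ℝ → ℝ} (hf : AllDerivL2 f) : MemLp f ∞ volume := by
  obtain ⟨M, hM⟩ := hf.bounded
  exact memLp_top_of_bound hf.1.continuous.aestronglyMeasurable M
    (Eventually.of_forall (by simpa [Real.norm_eq_abs] using hM))

lemma AllDerivL2.mul' {f g : ℝ → ℝ} (hf : AllDerivL2 f) (hg : AllDerivL2 g) :
    AllDerivL2 (fun x => f x * g x) := by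
  refine ⟨hf.1.mul hg.1, fun k => ?_⟩
  rw [iteratedDeriv_mul' hf.1 hg.1 k]
  have hterm : ∀ j ∈ Finset.range (k+1), MemLp (fun x => (k.choose j : ℝ) *
      (iteratedDeriv j f x * iteratedDeriv (k - j) g x)) 2 volume := by
    intro j _
    have h1 : MemLp (fun x => iteratedDeriv j f x * iteratedDeriv (k - j) g x) 2 volume := by
      have := MemLp.smul (p := 2) (q := ∞) (r := 2) (f := iteratedDeriv j f)
        (φ := iteratedDeriv (k - j) g) (hf.iter j).memTop (hg.2 (k - j))
      have h2 : (fun x => iteratedDeriv j f x * iteratedDeriv (k - j) g x)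
          = iteratedDeriv (k - j) g • iteratedDeriv j f := by
        funext x; simp [mul_comm]
      rwa [h2]
    exact h1.const_mul _
  have := memLp_finsetSum' (Finset.range (k+1)) hterm
  simpa [Finset.sum_fn] using this


/- ## norm lemmas -/

lemma L2Norm_nonneg (f : ℝ → ℝ) : 0 ≤ L2Norm f := ENNReal.toReal_nonneg

lemma HNorm_nonneg (s : ℕ) (f : ℝ → ℝ) : 0 ≤ HNorm s f := Real.sqrt_nonneg _

lemma L2Norm_add_le {f g : ℝ → ℝ} (hf : MemLp f 2 volume) (hg : MemLp g 2 volume) :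
    L2Norm (fun x => f x + g x) ≤ L2Norm f + L2Norm g := by
  have h := eLpNorm_add_le hf.1 hg.1 (by norm_num : (1:ℝ≥0∞) ≤ 2)
  exact ENNReal.toReal_le_add h hf.2.ne hg.2.ne

lemma L2Norm_cmul (C : ℝ) (f : ℝ → ℝ) : L2Norm (fun x => C * f x) = |C| * L2Norm f := by
  unfold L2Norm
  have h : (fun x => C * f x) = C • f := rfl
  rw [h, eLpNorm_const_smul]
  simp [ENNReal.toReal_smul, NNReal.smul_def, Real.norm_eq_abs]

lemma sqrt_minkowski {ι : Type*} (t : Finset ι) (b a c : ι → ℝ) (hb : ∀ i ∈ t, 0 ≤ b i) :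
    Real.sqrt (∑ i ∈ t, b i * (a i + c i) ^ 2) ≤
      Real.sqrt (∑ i ∈ t, b i * a i ^ 2) + Real.sqrt (∑ i ∈ t, b i * c i ^ 2) := by
  set A := Real.sqrt (∑ i ∈ t, b i * a i ^ 2) with hA
  set C := Real.sqrt (∑ i ∈ t, b i * c i ^ 2) with hC
  have hA0 : 0 ≤ A := Real.sqrt_nonneg _
  have hC0 : 0 ≤ C := Real.sqrt_nonneg _
  have hsa : 0 ≤ ∑ i ∈ t, b i * a i ^ 2 :=
    Finset.sum_nonneg fun i hi => mul_nonneg (hb i hi) (sq_nonneg _)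
  have hsc : 0 ≤ ∑ i ∈ t, b i * c i ^ 2 :=
    Finset.sum_nonneg fun i hi => mul_nonneg (hb i hi) (sq_nonneg _)
  have hA2 : A ^ 2 = ∑ i ∈ t, b i * a i ^ 2 := Real.sq_sqrt hsa
  have hC2 : C ^ 2 = ∑ i ∈ t, b i * c i ^ 2 := Real.sq_sqrt hsc
  have hcs : ∑ i ∈ t, b i * (a i * c i) ≤ A * C := by
    have h1 := Finset.sum_mul_sq_le_sq_mul_sq t
      (fun i => Real.sqrt (b i) * a i) (fun i => Real.sqrt (b i) * c i)
    have h2 : ∀ i ∈ t, (Real.sqrt (b i) * a i) * (Real.sqrt (b i) * c i) = b i * (a i * c i) := by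
      intro i hi; rw [mul_mul_mul_comm, Real.mul_self_sqrt (hb i hi)]
    have h3 : ∀ i ∈ t, (Real.sqrt (b i) * a i) ^ 2 = b i * a i ^ 2 := by
      intro i hi; rw [mul_pow, Real.sq_sqrt (hb i hi)]
    have h4 : ∀ i ∈ t, (Real.sqrt (b i) * c i) ^ 2 = b i * c i ^ 2 := by
      intro i hi; rw [mul_pow, Real.sq_sqrt (hb i hi)]
    rw [Finset.sum_congr rfl h2, Finset.sum_congr rfl h3, Finset.sum_congr rfl h4] at h1
    calc ∑ i ∈ t, b i * (a i * c i) ≤ |∑ i ∈ t, b i * (a i * c i)| := le_abs_self _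
      _ = Real.sqrt ((∑ i ∈ t, b i * (a i * c i)) ^ 2) := (Real.sqrt_sq_eq_abs _).symm
      _ ≤ Real.sqrt ((∑ i ∈ t, b i * a i ^ 2) * (∑ i ∈ t, b i * c i ^ 2)) :=
          Real.sqrt_le_sqrt h1
      _ = A * C := by rw [Real.sqrt_mul hsa, hA, hC]
  have hle : ∑ i ∈ t, b i * (a i + c i) ^ 2 ≤ (A + C) ^ 2 := by
    have expand : ∑ i ∈ t, b i * (a i + c i) ^ 2
        = (∑ i ∈ t, b i * a i ^ 2) + 2 * (∑ i ∈ t, b i * (a i * c i))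
          + (∑ i ∈ t, b i * c i ^ 2) := by
      have e : ∀ i ∈ t, b i * (a i + c i) ^ 2
          = b i * a i ^ 2 + (2 * (b i * (a i * c i)) + b i * c i ^ 2) := fun i _ => by ring
      rw [Finset.sum_congr rfl e, Finset.sum_add_distrib, Finset.sum_add_distrib,
        ← Finset.mul_sum]
      ring
    calc ∑ i ∈ t, b i * (a i + c i) ^ 2
        = A ^ 2 + 2 * (∑ i ∈ t, b i * (a i * c i)) + C ^ 2 := by rw [expand, hA2, hC2]
      _ ≤ A ^ 2 + 2 * (A * C) + C ^ 2 := by linarith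
      _ = (A + C) ^ 2 := by ring
  calc Real.sqrt (∑ i ∈ t, b i * (a i + c i) ^ 2) ≤ Real.sqrt ((A + C) ^ 2) :=
        Real.sqrt_le_sqrt hle
    _ = A + C := Real.sqrt_sq (by positivity)

lemma HNorm_add_le (s : ℕ) {f g : ℝ → ℝ} (hf : AllDerivL2 f) (hg : AllDerivL2 g) :
    HNorm s (fun x => f x + g x) ≤ HNorm s f + HNorm s g := by
  unfold HNorm
  have h1 : ∀ j, L2Norm (iteratedDeriv j (fun x => f x + g x))
      ≤ L2Norm (iteratedDeriv j f) + L2Norm (iteratedDeriv j g) := by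
    intro j
    rw [iteratedDeriv_add' hf.1 hg.1]
    exact L2Norm_add_le (hf.2 j) (hg.2 j)
  refine le_trans (Real.sqrt_le_sqrt (Finset.sum_le_sum fun j _ => ?_))
    (sqrt_minkowski _ _ _ _ fun j _ => by positivity)
  refine mul_le_mul_of_nonneg_left ?_ (by positivity)
  exact pow_le_pow_left₀ (L2Norm_nonneg _) (h1 j) 2

lemma HNorm_zero_fun (s : ℕ) : HNorm s (fun _ => (0:ℝ)) = 0 := by
  have h : ∀ j : ℕ, iteratedDeriv j (fun _ : ℝ => (0:ℝ)) = fun _ => (0:ℝ) := by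
    intro j
    induction j with
    | zero => simp
    | succ j ih => rw [iteratedDeriv_succ, ih]; funext x; simp
  unfold HNorm
  have : ∀ j ∈ Finset.range (s+1), (s.choose j : ℝ) *
      (L2Norm (iteratedDeriv j (fun _ : ℝ => (0:ℝ)))) ^ 2 = 0 := by
    intro j _
    rw [h j]
    have : L2Norm (fun _ : ℝ => (0:ℝ)) = 0 := by
      unfold L2Norm
      have : eLpNorm (fun _ : ℝ => (0:ℝ)) 2 volume = 0 := eLpNorm_zero
      rw [this]; simp
    rw [this]; ring
  rw [Finset.sum_congr rfl this]
  simp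

lemma AllDerivL2.zero_fun : AllDerivL2 (fun _ : ℝ => (0:ℝ)) := by
  constructor
  · exact contDiff_const
  · intro k
    have h : ∀ j : ℕ, iteratedDeriv j (fun _ : ℝ => (0:ℝ)) = fun _ => (0:ℝ) := by
      intro j
      induction j with
      | zero => simp
      | succ j ih => rw [iteratedDeriv_succ, ih]; funext x; simp
    rw [h k]
    have : (fun _ : ℝ => (0:ℝ)) = (0 : ℝ → ℝ) := rfl
    rw [this]
    exact MemLp.zero

lemma AllDerivL2.sum' {ι : Type*} (t : Finset ι) (F : ι → ℝ → ℝ)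
    (hF : ∀ i ∈ t, AllDerivL2 (F i)) : AllDerivL2 (fun x => ∑ i ∈ t, F i x) := by
  induction t using Finset.cons_induction with
  | empty => simpa using AllDerivL2.zero_fun
  | cons a t ha ih =>
    simp only [Finset.sum_cons]
    exact (hF a (Finset.mem_cons_self a t)).add'
      (ih fun i hi => hF i (Finset.mem_cons_of_mem hi))

lemma HNorm_sum_le (s : ℕ) {ι : Type*} (t : Finset ι) (F : ι → ℝ → ℝ)
    (hF : ∀ i ∈ t, AllDerivL2 (F i)) :
    HNorm s (fun x => ∑ i ∈ t, F i x) ≤ ∑ i ∈ t, HNorm s (F i) := by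
  induction t using Finset.cons_induction with
  | empty => simp [HNorm_zero_fun]
  | cons a t ha ih =>
    simp only [Finset.sum_cons]
    refine le_trans (HNorm_add_le s (hF a (Finset.mem_cons_self a t))
      (AllDerivL2.sum' t F fun i hi => hF i (Finset.mem_cons_of_mem hi))) ?_
    exact add_le_add_right (ih fun i hi => hF i (Finset.mem_cons_of_mem hi)) _

lemma HNorm_cmul (s : ℕ) {f : ℝ → ℝ} (hf : ContDiff ℝ (⊤ : ℕ∞) f) (C : ℝ) :
    HNorm s (fun x => C * f x) = |C| * HNorm s f := by
  unfold HNorm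
  have h : ∀ j, L2Norm (iteratedDeriv j fun x => C * f x)
      = |C| * L2Norm (iteratedDeriv j f) := by
    intro j
    rw [iteratedDeriv_cmul hf C j]
    exact L2Norm_cmul C _
  have h2 : ∀ j ∈ Finset.range (s+1), (s.choose j : ℝ) *
      (L2Norm (iteratedDeriv j fun x => C * f x)) ^ 2
      = |C| ^ 2 * ((s.choose j : ℝ) * (L2Norm (iteratedDeriv j f)) ^ 2) := by
    intro j _
    rw [h j]; ring
  rw [Finset.sum_congr rfl h2, ← Finset.mul_sum, Real.sqrt_mul (sq_nonneg _),
    Real.sqrt_sq (abs_nonneg _)]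

lemma HNorm_one_le {s : ℕ} (hs : 1 ≤ s) (f : ℝ → ℝ) : HNorm 1 f ≤ HNorm s f := by
  apply Real.sqrt_le_sqrt
  calc ∑ j ∈ Finset.range 2, (Nat.choose 1 j : ℝ) * (L2Norm (iteratedDeriv j f)) ^ 2
      ≤ ∑ j ∈ Finset.range 2, (Nat.choose s j : ℝ) * (L2Norm (iteratedDeriv j f)) ^ 2 := by
        refine Finset.sum_le_sum fun j hj => ?_
        have hj2 : j < 2 := Finset.mem_range.mp hj
        have hc : Nat.choose 1 j ≤ Nat.choose s j := by
          interval_cases j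
          · simp
          · simpa [Nat.choose_one_right] using hs
        exact mul_le_mul_of_nonneg_right (by exact_mod_cast hc) (sq_nonneg _)
    _ ≤ ∑ j ∈ Finset.range (s+1), (Nat.choose s j : ℝ) * (L2Norm (iteratedDeriv j f)) ^ 2 :=
        Finset.sum_le_sum_of_subset_of_nonneg (Finset.range_subset_range.mpr (by omega))
          (fun j _ _ => by positivity)


/- ## combinatorics -/

lemma sum_inv_sq_le (n : ℕ) :
    ∑ i ∈ Finset.range n, (1 / ((i:ℝ)+1)) ^ 2 ≤ 2 - 1 / (n:ℝ) := by
  induction n with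
  | zero => simp
  | succ n ih =>
    rw [Finset.sum_range_succ]
    push_cast
    rcases Nat.eq_zero_or_pos n with h0 | hpos
    · subst h0; norm_num
    · have hn : (1:ℝ) ≤ (n:ℝ) := by exact_mod_cast hpos
      have h1 : (1/((n:ℝ)+1))^2 ≤ 1/(n:ℝ) - 1/((n:ℝ)+1) := by
        rw [div_sub_div _ _ (by positivity) (by positivity), div_pow,
          div_le_div_iff₀ (by positivity) (by positivity)]
        nlinarith
      linarith

lemma sum_inv_sq_le_two (n : ℕ) : ∑ i ∈ Finset.range n, (1 / ((i:ℝ)+1)) ^ 2 ≤ 2 := by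
  refine (sum_inv_sq_le n).trans ?_
  have : (0:ℝ) ≤ 1 / (n:ℝ) := by positivity
  linarith

lemma key_combin (k : ℕ) : ∑ j ∈ Finset.range (k+1),
    (((k:ℝ)+1) / (((j:ℝ)+1) * (((k-j : ℕ):ℝ)+1))) ^ 2 ≤ 9 := by
  have h1 : ∀ j ∈ Finset.range (k+1),
      (((k:ℝ)+1) / (((j:ℝ)+1) * (((k-j : ℕ):ℝ)+1))) ^ 2
      ≤ 2 * (1 / ((j:ℝ)+1)) ^ 2 + 2 * (1 / (((k-j:ℕ):ℝ)+1)) ^ 2 := by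
    intro j hj
    have hjk : j ≤ k := by
      have := Finset.mem_range.mp hj; omega
    have hcast : ((k-j:ℕ):ℝ) = (k:ℝ) - (j:ℝ) := by
      push_cast [Nat.cast_sub hjk]; ring
    set a : ℝ := (j:ℝ) + 1 with hadef
    set b : ℝ := ((k-j:ℕ):ℝ) + 1 with hbdef
    have ha : (0:ℝ) < a := by positivity
    have hb : (0:ℝ) < b := by positivity
    have hab : a + b = (k:ℝ) + 2 := by rw [hadef, hbdef, hcast]; ring
    have e1 : ((k:ℝ)+1) / (a * b) ≤ 1 / a + 1 / b := by
      rw [div_add_div _ _ ha.ne' hb.ne', one_mul, mul_one,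
        div_le_div_iff₀ (by positivity) (by positivity)]
      nlinarith [mul_pos ha hb]
    have e2 : (((k:ℝ)+1)/(a*b))^2 ≤ (1/a + 1/b)^2 :=
      pow_le_pow_left₀ (by positivity) e1 2
    have e3 : (1/a + 1/b)^2 ≤ 2*(1/a)^2 + 2*(1/b)^2 := by
      nlinarith [sq_nonneg (1/a - 1/b)]
    exact e2.trans e3
  have hrefl : ∑ j ∈ Finset.range (k+1), (1/(((k-j:ℕ):ℝ)+1))^2
      = ∑ j ∈ Finset.range (k+1), (1/((j:ℝ)+1))^2 := by
    have := Finset.sum_range_reflect (fun i => (1/((i:ℝ)+1))^2) (k+1)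
    simpa using this
  calc ∑ j ∈ Finset.range (k+1),
        (((k:ℝ)+1) / (((j:ℝ)+1) * (((k-j : ℕ):ℝ)+1))) ^ 2
      ≤ ∑ j ∈ Finset.range (k+1),
        (2 * (1 / ((j:ℝ)+1)) ^ 2 + 2 * (1 / (((k-j:ℕ):ℝ)+1)) ^ 2) := Finset.sum_le_sum h1
    _ = 2 * (∑ j ∈ Finset.range (k+1), (1 / ((j:ℝ)+1)) ^ 2)
        + 2 * (∑ j ∈ Finset.range (k+1), (1 / (((k-j:ℕ):ℝ)+1)) ^ 2) := by
        rw [Finset.sum_add_distrib, Finset.mul_sum, Finset.mul_sum]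
    _ = 4 * (∑ j ∈ Finset.range (k+1), (1 / ((j:ℝ)+1)) ^ 2) := by rw [hrefl]; ring
    _ ≤ 4 * 2 := by
        have := sum_inv_sq_le_two (k+1)
        linarith
    _ ≤ 9 := by norm_num


/-- the algebra property `‖uv‖_{(δ,s)} ≤ 18 c_s ‖u‖_{(δ,s)} ‖v‖_{(δ,s)}`. -/
theorem ENorm_mul_le (s : ℕ) (hs : 2 ≤ s) (δ : ℝ) (hδ0 : 0 < δ) (hδ1 : δ ≤ 1)
    (c : ℝ) (hc : 0 < c)
    (hmul : ∀ f g : ℝ → ℝ, AllDerivL2 f → AllDerivL2 g →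
      HNorm s (fun x => f x * g x) ≤ c * (HNorm s f * HNorm 1 g + HNorm 1 f * HNorm s g))
    (u v : ℝ → ℝ) (hu : AllDerivL2 u) (hv : AllDerivL2 v) :
    ENorm δ s (fun x => u x * v x) ≤ ENNReal.ofReal (18 * c) * ENorm δ s u * ENorm δ s v := by
  have hs1 : 1 ≤ s := by omega
  have hUnn : ∀ j : ℕ, 0 ≤ δ ^ j * ((j : ℝ) + 1) ^ 2 * HNorm s (iteratedDeriv j u)
      / (j.factorial : ℝ) := fun j =>
    div_nonneg (mul_nonneg (mul_nonneg (pow_nonneg hδ0.le _) (sq_nonneg _))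
      (HNorm_nonneg _ _)) (Nat.cast_nonneg _)
  have hVnn : ∀ j : ℕ, 0 ≤ δ ^ j * ((j : ℝ) + 1) ^ 2 * HNorm s (iteratedDeriv j v)
      / (j.factorial : ℝ) := fun j =>
    div_nonneg (mul_nonneg (mul_nonneg (pow_nonneg hδ0.le _) (sq_nonneg _))
      (HNorm_nonneg _ _)) (Nat.cast_nonneg _)
  have key : ∀ k : ℕ,
      δ ^ k * ((k : ℝ) + 1) ^ 2 * HNorm s (iteratedDeriv k fun x => u x * v x)
          / (k.factorial : ℝ)
      ≤ ∑ j ∈ Finset.range (k+1),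
          2 * c * ((((k:ℝ)+1) / (((j:ℝ)+1) * (((k-j : ℕ):ℝ)+1))) ^ 2)
            * (δ ^ j * ((j : ℝ) + 1) ^ 2 * HNorm s (iteratedDeriv j u) / (j.factorial : ℝ))
            * (δ ^ (k-j) * (((k-j : ℕ) : ℝ) + 1) ^ 2 * HNorm s (iteratedDeriv (k-j) v)
                / ((k-j).factorial : ℝ)) := by
    intro k
    have hA : HNorm s (iteratedDeriv k fun x => u x * v x)
        ≤ ∑ j ∈ Finset.range (k+1), (k.choose j : ℝ) *
            (2 * c * (HNorm s (iteratedDeriv j u) * HNorm s (iteratedDeriv (k-j) v))) := by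
      rw [iteratedDeriv_mul' hu.1 hv.1 k]
      refine le_trans (HNorm_sum_le s _ _ ?_) (Finset.sum_le_sum ?_)
      · intro j _
        exact ((hu.iter j).mul' (hv.iter (k-j))).cmul _
      · intro j _
        rw [HNorm_cmul s ((contDiff_top_iteratedDeriv hu.1 j).mul
          (contDiff_top_iteratedDeriv hv.1 (k-j))) _]
        rw [abs_of_nonneg (by positivity : (0:ℝ) ≤ (k.choose j:ℝ))]
        refine mul_le_mul_of_nonneg_left ?_ (by positivity)
        refine le_trans (hmul _ _ (hu.iter j) (hv.iter (k-j))) ?_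
        have h1 := HNorm_one_le hs1 (iteratedDeriv (k-j) v)
        have h2 := HNorm_one_le hs1 (iteratedDeriv j u)
        have n1 := HNorm_nonneg s (iteratedDeriv j u)
        have n2 := HNorm_nonneg s (iteratedDeriv (k-j) v)
        have n3 := HNorm_nonneg 1 (iteratedDeriv j u)
        have n4 := HNorm_nonneg 1 (iteratedDeriv (k-j) v)
        have m1 : HNorm s (iteratedDeriv j u) * HNorm 1 (iteratedDeriv (k-j) v)
            ≤ HNorm s (iteratedDeriv j u) * HNorm s (iteratedDeriv (k-j) v) :=
          mul_le_mul_of_nonneg_left h1 n1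
        have m2 : HNorm 1 (iteratedDeriv j u) * HNorm s (iteratedDeriv (k-j) v)
            ≤ HNorm s (iteratedDeriv j u) * HNorm s (iteratedDeriv (k-j) v) :=
          mul_le_mul_of_nonneg_right h2 n2
        nlinarith [hc.le]
    have hfactpos : (0:ℝ) < (k.factorial : ℝ) := by
      exact_mod_cast k.factorial_pos
    have hmono : δ ^ k * ((k : ℝ) + 1) ^ 2 * HNorm s (iteratedDeriv k fun x => u x * v x)
          / (k.factorial : ℝ)
        ≤ δ ^ k * ((k : ℝ) + 1) ^ 2 * (∑ j ∈ Finset.range (k+1), (k.choose j : ℝ) *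
            (2 * c * (HNorm s (iteratedDeriv j u) * HNorm s (iteratedDeriv (k-j) v))))
          / (k.factorial : ℝ) := by
      gcongr
    refine hmono.trans (le_of_eq ?_)
    rw [Finset.mul_sum, Finset.sum_div]
    refine Finset.sum_congr rfl fun j hj => ?_
    have hjk : j ≤ k := by have := Finset.mem_range.mp hj; omega
    obtain ⟨m, rfl⟩ : ∃ m, k = j + m := ⟨k - j, by omega⟩
    have hkj : (j + m) - j = m := by omega
    simp only [hkj]
    have hfj : ((j.factorial : ℝ)) ≠ 0 := by
      exact_mod_cast j.factorial_ne_zero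
    have hfm : ((m.factorial : ℝ)) ≠ 0 := by
      exact_mod_cast m.factorial_ne_zero
    have hfjm : (((j+m).factorial : ℝ)) ≠ 0 := by
      exact_mod_cast (j+m).factorial_ne_zero
    have hch : (((j+m).choose j : ℝ)) = ((j+m).factorial : ℝ)
        / ((j.factorial : ℝ) * (m.factorial : ℝ)) := by
      rw [Nat.cast_choose ℝ (by omega : j ≤ j + m), Nat.add_sub_cancel_left]
    have hj1 : ((j:ℝ) + 1) ≠ 0 := by positivity
    have hm1 : ((m:ℝ) + 1) ≠ 0 := by positivity
    have hcast : ((j + m : ℕ) : ℝ) = (j:ℝ) + (m:ℝ) := by push_cast; ring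
    rw [hch, hcast]
    field_simp
    ring
  rw [show (ENorm δ s fun x => u x * v x) = ⨆ k : ℕ, ENNReal.ofReal
      (δ ^ k * ((k : ℝ) + 1) ^ 2 * HNorm s (iteratedDeriv k fun x => u x * v x)
        / (k.factorial : ℝ)) from rfl]
  refine iSup_le fun k => ?_
  have hUle : ∀ j : ℕ, ENNReal.ofReal (δ ^ j * ((j : ℝ) + 1) ^ 2
      * HNorm s (iteratedDeriv j u) / (j.factorial : ℝ)) ≤ ENorm δ s u := fun j =>
    le_iSup (fun k : ℕ => ENNReal.ofReal (δ ^ k * ((k : ℝ) + 1) ^ 2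
      * HNorm s (iteratedDeriv k u) / (k.factorial : ℝ))) j
  have hVle : ∀ j : ℕ, ENNReal.ofReal (δ ^ j * ((j : ℝ) + 1) ^ 2
      * HNorm s (iteratedDeriv j v) / (j.factorial : ℝ)) ≤ ENorm δ s v := fun j =>
    le_iSup (fun k : ℕ => ENNReal.ofReal (δ ^ k * ((k : ℝ) + 1) ^ 2
      * HNorm s (iteratedDeriv k v) / (k.factorial : ℝ))) j
  have htnn : ∀ j : ℕ, (0:ℝ) ≤ 2 * c * ((((k:ℝ)+1) / (((j:ℝ)+1) * (((k-j : ℕ):ℝ)+1))) ^ 2) :=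
    fun j => by positivity
  calc ENNReal.ofReal (δ ^ k * ((k : ℝ) + 1) ^ 2
        * HNorm s (iteratedDeriv k fun x => u x * v x) / (k.factorial : ℝ))
      ≤ ENNReal.ofReal (∑ j ∈ Finset.range (k+1),
          2 * c * ((((k:ℝ)+1) / (((j:ℝ)+1) * (((k-j : ℕ):ℝ)+1))) ^ 2)
            * (δ ^ j * ((j : ℝ) + 1) ^ 2 * HNorm s (iteratedDeriv j u) / (j.factorial : ℝ))
            * (δ ^ (k-j) * (((k-j : ℕ) : ℝ) + 1) ^ 2 * HNorm s (iteratedDeriv (k-j) v)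
                / ((k-j).factorial : ℝ))) := ENNReal.ofReal_le_ofReal (key k)
    _ = ∑ j ∈ Finset.range (k+1), ENNReal.ofReal (
          2 * c * ((((k:ℝ)+1) / (((j:ℝ)+1) * (((k-j : ℕ):ℝ)+1))) ^ 2)
            * (δ ^ j * ((j : ℝ) + 1) ^ 2 * HNorm s (iteratedDeriv j u) / (j.factorial : ℝ))
            * (δ ^ (k-j) * (((k-j : ℕ) : ℝ) + 1) ^ 2 * HNorm s (iteratedDeriv (k-j) v)
                / ((k-j).factorial : ℝ))) :=
        ENNReal.ofReal_sum_of_nonneg (fun j _ =>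
          mul_nonneg (mul_nonneg (htnn j) (hUnn j)) (hVnn (k-j)))
    _ ≤ ∑ j ∈ Finset.range (k+1),
          ENNReal.ofReal (2 * c * ((((k:ℝ)+1) / (((j:ℝ)+1) * (((k-j : ℕ):ℝ)+1))) ^ 2))
            * ENorm δ s u * ENorm δ s v := by
        refine Finset.sum_le_sum fun j _ => ?_
        rw [ENNReal.ofReal_mul (mul_nonneg (htnn j) (hUnn j)),
          ENNReal.ofReal_mul (htnn j)]
        exact mul_le_mul' (mul_le_mul' le_rfl (hUle j)) (hVle (k-j))
    _ = (∑ j ∈ Finset.range (k+1),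
          ENNReal.ofReal (2 * c * ((((k:ℝ)+1) / (((j:ℝ)+1) * (((k-j : ℕ):ℝ)+1))) ^ 2)))
            * ENorm δ s u * ENorm δ s v := by
        rw [← Finset.sum_mul, ← Finset.sum_mul]
    _ ≤ ENNReal.ofReal (18 * c) * ENorm δ s u * ENorm δ s v := by
        refine mul_le_mul' (mul_le_mul' ?_ le_rfl) le_rfl
        rw [← ENNReal.ofReal_sum_of_nonneg (fun j _ => htnn j)]
        apply ENNReal.ofReal_le_ofReal
        have hsum : ∑ j ∈ Finset.range (k+1),
            2 * c * ((((k:ℝ)+1) / (((j:ℝ)+1) * (((k-j : ℕ):ℝ)+1))) ^ 2)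
            = 2 * c * ∑ j ∈ Finset.range (k+1),
              ((((k:ℝ)+1) / (((j:ℝ)+1) * (((k-j : ℕ):ℝ)+1))) ^ 2) := by
          rw [Finset.mul_sum]
        rw [hsum]
        have h9 := key_combin k
        nlinarith [hc.le]


end GCH
end
end

section
/- For every σ ∈ ℝ, every integer m ≥ 1, and all u, v : ℝ → ℝ smooth with all derivatives in L²(ℝ): |Σ_{j=0}^{m} (e^{2jσ}/(j!)²) ⟨v^{(j)}, u^{(j+1)}⟩_{H²}| ≤ 4 Φ_{σ,m}(u,v) + 2 ∂_σΦ_{σ,m}(u,v). -/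
open MeasureTheory Filter
open scoped ENNReal Topology

noncomputable section
namespace GCH

lemma abs_L2Inner_le {f g : ℝ → ℝ} (hf : MemLp f 2 volume) (hg : MemLp g 2 volume) :
    |L2Inner f g| ≤ L2Norm f * L2Norm g := by
  have h := abs_real_inner_le_norm (hf.toLp f) (hg.toLp g)
  rw [MeasureTheory.L2.inner_def, Lp.norm_toLp f hf, Lp.norm_toLp g hg] at h
  calc |L2Inner f g| = |∫ x, inner ℝ ((hf.toLp f) x) ((hg.toLp g) x)| := by
        unfold L2Inner
        congr 1
        refine integral_congr_ae ?_
        filter_upwards [hf.coeFn_toLp, hg.coeFn_toLp] with x h1 h2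
        rw [h1, h2]; simp [RCLike.inner_apply, mul_comm]
    _ ≤ _ := h

lemma HNorm2_eq (f : ℝ → ℝ) :
    HNorm 2 f = Real.sqrt (L2Norm f ^ 2 + 2 * L2Norm (deriv f) ^ 2
      + L2Norm (iteratedDeriv 2 f) ^ 2) := by
  unfold HNorm
  congr 1
  rw [show (2:ℕ)+1 = 3 from rfl, Finset.sum_range_succ, Finset.sum_range_succ,
    Finset.sum_range_one, iteratedDeriv_zero, iteratedDeriv_one]
  norm_num

lemma iteratedDeriv_two_iteratedDeriv (f : ℝ → ℝ) (j : ℕ) :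
    iteratedDeriv 2 (iteratedDeriv j f) = iteratedDeriv (j + 2) f := by
  have h2 : iteratedDeriv 2 (iteratedDeriv j f) = deriv (deriv (iteratedDeriv j f)) := by
    rw [show (2:ℕ) = 1 + 1 from rfl, iteratedDeriv_succ, iteratedDeriv_one]
  rw [h2, ← iteratedDeriv_succ, ← iteratedDeriv_succ]

lemma abs_H2Inner_le {f g : ℝ → ℝ}
    (hf0 : MemLp f 2 volume) (hf1 : MemLp (deriv f) 2 volume)
    (hf2 : MemLp (iteratedDeriv 2 f) 2 volume)
    (hg0 : MemLp g 2 volume) (hg1 : MemLp (deriv g) 2 volume)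
    (hg2 : MemLp (iteratedDeriv 2 g) 2 volume) :
    |H2Inner f g| ≤ HNorm 2 f * HNorm 2 g := by
  set a0 := L2Norm f with ha0
  set a1 := L2Norm (deriv f)
  set a2 := L2Norm (iteratedDeriv 2 f)
  set b0 := L2Norm g
  set b1 := L2Norm (deriv g)
  set b2 := L2Norm (iteratedDeriv 2 g)
  have h0 := abs_L2Inner_le hf0 hg0
  have h1 := abs_L2Inner_le hf1 hg1
  have h2 := abs_L2Inner_le hf2 hg2
  have na0 := L2Norm_nonneg f
  have na1 := L2Norm_nonneg (deriv f)
  have na2 := L2Norm_nonneg (iteratedDeriv 2 f)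
  have nb0 := L2Norm_nonneg g
  have nb1 := L2Norm_nonneg (deriv g)
  have nb2 := L2Norm_nonneg (iteratedDeriv 2 g)
  have step1 : |H2Inner f g| ≤ a0*b0 + 2*(a1*b1) + a2*b2 := by
    unfold H2Inner
    have t1 := abs_add_le (L2Inner f g + 2 * L2Inner (deriv f) (deriv g))
      (L2Inner (iteratedDeriv 2 f) (iteratedDeriv 2 g))
    have t2 := abs_add_le (L2Inner f g) (2 * L2Inner (deriv f) (deriv g))
    rw [abs_mul, abs_two] at t2
    linarith
  have key2 : a0*b0 + 2*(a1*b1) + a2*b2 ≤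
      Real.sqrt (a0^2 + 2*a1^2 + a2^2) * Real.sqrt (b0^2 + 2*b1^2 + b2^2) := by
    rw [← Real.sqrt_mul (by positivity)]
    rw [Real.le_sqrt (by positivity) (by positivity)]
    nlinarith [sq_nonneg (a0*b1 - a1*b0), sq_nonneg (a0*b2 - a2*b0), sq_nonneg (a1*b2 - a2*b1),
      mul_nonneg (mul_nonneg na0 nb0) (mul_nonneg na1 nb1),
      mul_nonneg (mul_nonneg na0 nb0) (mul_nonneg na2 nb2),
      mul_nonneg (mul_nonneg na1 nb1) (mul_nonneg na2 nb2)]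
  rw [HNorm2_eq, HNorm2_eq]
  exact le_trans step1 key2



theorem estimate7' (σ : ℝ) (m : ℕ) (hm : 1 ≤ m) (u v : ℝ → ℝ)
    (hu : AllDerivL2 u) (hv : AllDerivL2 v) :
    |∑ j ∈ Finset.range (m + 1), Real.exp (2 * (j : ℝ) * σ) / ((j.factorial : ℝ)) ^ 2 *
        H2Inner (iteratedDeriv j v) (iteratedDeriv (j + 1) u)| ≤
      4 * Phi σ m u v + 2 * dPhi σ m u v := by
  set A : ℕ → ℝ := fun j => Real.exp (2*(j:ℝ)*σ) / ((j.factorial:ℝ))^2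
    * HNorm 2 (iteratedDeriv j v) ^ 2 with hA
  set B : ℕ → ℝ := fun j => Real.exp (2*(j:ℝ)*σ) / (((j+1).factorial:ℝ))^2
    * HNorm 2 (iteratedDeriv (j+1) u) ^ 2 with hB
  have hterm : ∀ j ∈ Finset.range (m+1),
      |Real.exp (2 * (j : ℝ) * σ) / ((j.factorial : ℝ)) ^ 2 *
        H2Inner (iteratedDeriv j v) (iteratedDeriv (j + 1) u)|
      ≤ ((j:ℝ)+1)/2 * A j + ((j:ℝ)+1)/2 * B j := by
    intro j _
    have hv0 := hv.2 j
    have hv1 : MemLp (deriv (iteratedDeriv j v)) 2 volume := by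
      rw [← iteratedDeriv_succ]; exact hv.2 (j+1)
    have hv2 : MemLp (iteratedDeriv 2 (iteratedDeriv j v)) 2 volume := by
      rw [iteratedDeriv_two_iteratedDeriv]; exact hv.2 (j+2)
    have hu0 := hu.2 (j+1)
    have hu1 : MemLp (deriv (iteratedDeriv (j+1) u)) 2 volume := by
      rw [← iteratedDeriv_succ]; exact hu.2 (j+2)
    have hu2 : MemLp (iteratedDeriv 2 (iteratedDeriv (j+1) u)) 2 volume := by
      rw [iteratedDeriv_two_iteratedDeriv]; exact hu.2 (j+3)
    have hCS := abs_H2Inner_le hv0 hv1 hv2 hu0 hu1 hu2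
    set X := HNorm 2 (iteratedDeriv j v) with hXdef
    set Y := HNorm 2 (iteratedDeriv (j+1) u) with hYdef
    have hX : 0 ≤ X := Real.sqrt_nonneg _
    have hY : 0 ≤ Y := Real.sqrt_nonneg _
    have hF : (0:ℝ) < (j.factorial:ℝ) := by exact_mod_cast j.factorial_pos
    have habs : |Real.exp (2*(j:ℝ)*σ) / ((j.factorial:ℝ))^2 *
        H2Inner (iteratedDeriv j v) (iteratedDeriv (j + 1) u)| ≤
        Real.exp (2*(j:ℝ)*σ) / ((j.factorial:ℝ))^2 * (X*Y) := by
      rw [abs_mul, abs_of_pos (by positivity)]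
      exact mul_le_mul_of_nonneg_left hCS (by positivity)
    refine habs.trans ?_
    have hfs : (((j+1).factorial:ℝ)) = ((j:ℝ)+1) * (j.factorial:ℝ) := by
      push_cast [Nat.factorial_succ]; ring
    have key : X*Y ≤ ((j:ℝ)+1)/2 * X^2 + 1/(2*((j:ℝ)+1)) * Y^2 := by
      have hid : ((j:ℝ)+1)/2 * X^2 + 1/(2*((j:ℝ)+1)) * Y^2 - X*Y
          = (((j:ℝ)+1)*X - Y)^2 / (2*((j:ℝ)+1)) := by
        field_simp; ring
      nlinarith [div_nonneg (sq_nonneg (((j:ℝ)+1)*X - Y))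
        (by positivity : (0:ℝ) ≤ 2*((j:ℝ)+1))]
    calc Real.exp (2*(j:ℝ)*σ) / ((j.factorial:ℝ))^2 * (X*Y)
        ≤ Real.exp (2*(j:ℝ)*σ) / ((j.factorial:ℝ))^2 *
            (((j:ℝ)+1)/2 * X^2 + 1/(2*((j:ℝ)+1)) * Y^2) :=
          mul_le_mul_of_nonneg_left key (by positivity)
      _ = ((j:ℝ)+1)/2 * A j + ((j:ℝ)+1)/2 * B j := by
          simp only [hA, hB, hfs]
          field_simp
          ring
  have hsubset : Finset.Icc 1 m ⊆ Finset.range (m+1) := by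
    intro x hx
    simp only [Finset.mem_Icc] at hx
    simp only [Finset.mem_range]; omega
  have hPhi2 : Phi2 σ m v = (1/2) * ∑ j ∈ Finset.range (m+1), A j := rfl
  have hdPhi2 : dPhi2 σ m v = ∑ j ∈ Finset.range (m+1), (j:ℝ) * A j := by
    unfold dPhi2
    rw [Finset.sum_subset hsubset (fun x hx hnx => by
      have hx0 : x = 0 := by
        simp only [Finset.mem_range] at hx
        simp only [Finset.mem_Icc, not_and, not_le] at hnx
        omega
      subst hx0; simp)]
    exact Finset.sum_congr rfl fun j _ => by simp only [hA]; ring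
  have hPhi1 : Phi1 σ m u = (1/2) * ∑ j ∈ Finset.range (m+1), B j := by
    unfold Phi1
    congr 1
    rw [← Finset.Ico_add_one_right_eq_Icc, Finset.sum_Ico_eq_sum_range]
    refine Finset.sum_congr (by norm_num) fun i _ => ?_
    rw [Nat.add_comm 1 i]
    have hc : ((↑(i+1):ℝ)) - 1 = (i:ℝ) := by push_cast; ring
    rw [hc]
  have hsubset2 : Finset.Icc 2 (m+1) ⊆ Finset.Icc 1 (m+1) := by
    intro x hx
    simp only [Finset.mem_Icc] at hx ⊢; omega
  have hdPhi1 : dPhi1 σ m u = ∑ j ∈ Finset.range (m+1), (j:ℝ) * B j := by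
    unfold dPhi1
    rw [Finset.sum_subset hsubset2 (fun x hx hnx => by
      have hx1 : x = 1 := by
        simp only [Finset.mem_Icc] at hx
        simp only [Finset.mem_Icc, not_and, not_le] at hnx
        omega
      subst hx1; norm_num)]
    rw [← Finset.Ico_add_one_right_eq_Icc, Finset.sum_Ico_eq_sum_range]
    refine Finset.sum_congr (by norm_num) fun i _ => ?_
    rw [Nat.add_comm 1 i]
    have hc : ((↑(i+1):ℝ)) - 1 = (i:ℝ) := by push_cast; ring
    rw [hc]
    ring
  have hAnn : ∀ j, 0 ≤ A j := fun j => by simp only [hA]; positivity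
  have hBnn : ∀ j, 0 ≤ B j := fun j => by simp only [hB]; positivity
  have hjnn : ∀ j : ℕ, (0:ℝ) ≤ (j:ℝ) := fun j => Nat.cast_nonneg j
  have hPhinn : 0 ≤ Phi σ m u v := by
    unfold Phi
    rw [hPhi1, hPhi2]
    have s1 : (0:ℝ) ≤ ∑ j ∈ Finset.range (m+1), B j :=
      Finset.sum_nonneg fun j _ => hBnn j
    have s2 : (0:ℝ) ≤ ∑ j ∈ Finset.range (m+1), A j :=
      Finset.sum_nonneg fun j _ => hAnn j
    linarith
  have hdPhinn : 0 ≤ dPhi σ m u v := by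
    unfold dPhi
    rw [hdPhi1, hdPhi2]
    have s1 : (0:ℝ) ≤ ∑ j ∈ Finset.range (m+1), (j:ℝ) * B j :=
      Finset.sum_nonneg fun j _ => mul_nonneg (hjnn j) (hBnn j)
    have s2 : (0:ℝ) ≤ ∑ j ∈ Finset.range (m+1), (j:ℝ) * A j :=
      Finset.sum_nonneg fun j _ => mul_nonneg (hjnn j) (hAnn j)
    linarith
  calc |∑ j ∈ Finset.range (m + 1), Real.exp (2 * (j : ℝ) * σ) / ((j.factorial : ℝ)) ^ 2 *
        H2Inner (iteratedDeriv j v) (iteratedDeriv (j + 1) u)|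
      ≤ ∑ j ∈ Finset.range (m + 1), |Real.exp (2 * (j : ℝ) * σ) / ((j.factorial : ℝ)) ^ 2 *
        H2Inner (iteratedDeriv j v) (iteratedDeriv (j + 1) u)| :=
        Finset.abs_sum_le_sum_abs _ _
    _ ≤ ∑ j ∈ Finset.range (m+1), (((j:ℝ)+1)/2 * A j + ((j:ℝ)+1)/2 * B j) :=
        Finset.sum_le_sum hterm
    _ = Phi σ m u v + (1/2) * dPhi σ m u v := by
        unfold Phi dPhi
        rw [hPhi1, hPhi2, hdPhi1, hdPhi2, mul_add, Finset.mul_sum, Finset.mul_sum,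
          Finset.mul_sum, Finset.mul_sum, ← Finset.sum_add_distrib, ← Finset.sum_add_distrib,
          ← Finset.sum_add_distrib]
        exact Finset.sum_congr rfl fun j _ => by ring
    _ ≤ 4 * Phi σ m u v + 2 * dPhi σ m u v := by linarith

/-- Estimate 7, the sum of pairings `⟨v^{(j)}, u^{(j+1)}⟩_{H²}`. -/
theorem estimate7 (σ : ℝ) (m : ℕ) (hm : 1 ≤ m) (u v : ℝ → ℝ)
    (hu : AllDerivL2 u) (hv : AllDerivL2 v) :
    |∑ j ∈ Finset.range (m + 1), Real.exp (2 * (j : ℝ) * σ) / ((j.factorial : ℝ)) ^ 2 *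
        H2Inner (iteratedDeriv j v) (iteratedDeriv (j + 1) u)| ≤
      4 * Phi σ m u v + 2 * dPhi σ m u v := by
  exact estimate7' σ m hm u v hu hv

end GCH
end
end

section
/- Let m ≥ 1 be an integer and let a₁, …, a_{m+1} be nonnegative real numbers. Set A = (Σ_{j=1}^{m+1} a_j²)^{1/2} and Ã = (Σ_{j=2}^{m+1} j a_j²)^{1/2}. Then Σ_{j=3}^{m+1} Σ_{ℓ=2}^{j−1} a_j a_ℓ a_{j−ℓ} ≤ (π/√6) A Ã², and Σ_{j=3}^{m+1} Σ_{ℓ=2}^{j−1} ((j−ℓ+1)/ℓ) a_j a_{ℓ−1} a_{j−ℓ+1} ≤ (π/√6) A Ã². -/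
open MeasureTheory Filter
open scoped ENNReal Topology

noncomputable section
namespace GCH

lemma gch_aux_basel_sq (s : Finset ℕ) : ∑ n ∈ s, (1:ℝ)/(n:ℝ)^2 ≤ Real.pi^2/6 :=
  sum_le_hasSum s (fun i _ => by positivity) hasSum_zeta_two

lemma gch_aux_sqrt_pi_sq_six : Real.sqrt (Real.pi^2/6) = Real.pi / Real.sqrt 6 := by
  rw [Real.sqrt_div (sq_nonneg _), Real.sqrt_sq Real.pi_pos.le]

lemma gch_aux_sum_comp_le {f : ℕ → ℝ} (hf : ∀ n, 0 ≤ f n) (s : Finset ℕ) (e : ℕ → ℕ)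
    (he : Set.InjOn e s) (t : Finset ℕ) (hmap : ∀ x ∈ s, e x ∈ t) :
    ∑ x ∈ s, f (e x) ≤ ∑ n ∈ t, f n := by
  rw [← Finset.sum_image (fun x hx y hy => he hx hy)]
  exact Finset.sum_le_sum_of_subset_of_nonneg (Finset.image_subset_iff.2 hmap)
    (fun i _ _ => hf i)

lemma gch_aux_part1 (m : ℕ) (a : ℕ → ℝ) (ha : ∀ j ∈ Finset.Icc 1 (m + 1), 0 ≤ a j) :
    (∑ j ∈ Finset.Icc 3 (m + 1), ∑ ℓ ∈ Finset.Icc 2 (j - 1), a j * a ℓ * a (j - ℓ)) ≤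
      Real.pi / Real.sqrt 6 * Real.sqrt (∑ j ∈ Finset.Icc 1 (m + 1), a j ^ 2) *
        (∑ j ∈ Finset.Icc 2 (m + 1), (j : ℝ) * a j ^ 2) := by
  set A2 := ∑ j ∈ Finset.Icc 1 (m+1), a j ^ 2 with hA2def
  set T2 := ∑ j ∈ Finset.Icc 2 (m+1), (j:ℝ) * a j ^ 2 with hT2def
  have hA2 : 0 ≤ A2 := Finset.sum_nonneg fun i _ => sq_nonneg _
  have hT2 : 0 ≤ T2 := Finset.sum_nonneg fun i _ => by positivity
  set P := (Finset.Icc 3 (m+1)).sigma (fun j => Finset.Icc 2 (j-1)) with hP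
  have hmem : ∀ p ∈ P, 3 ≤ p.1 ∧ p.1 ≤ m+1 ∧ 2 ≤ p.2 ∧ p.2 ≤ p.1 - 1 := by
    intro p hp
    rw [hP, Finset.mem_sigma, Finset.mem_Icc, Finset.mem_Icc] at hp
    exact ⟨hp.1.1, hp.1.2, hp.2.1, hp.2.2⟩
  have hf : ∑ p ∈ P, (Real.sqrt p.1 * a p.1 * (Real.sqrt p.2 * a p.2))^2 ≤ T2^2 := by
    have e1 : ∀ p ∈ P, (Real.sqrt p.1 * a p.1 * (Real.sqrt p.2 * a p.2))^2
        = ((p.1:ℝ) * a p.1^2) * ((p.2:ℝ) * a p.2^2) := by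
      intro p _
      rw [mul_pow, mul_pow, mul_pow, Real.sq_sqrt (Nat.cast_nonneg _),
        Real.sq_sqrt (Nat.cast_nonneg _)]
    rw [Finset.sum_congr rfl e1, hP, Finset.sum_sigma]
    calc ∑ j ∈ Finset.Icc 3 (m+1), ∑ ℓ ∈ Finset.Icc 2 (j-1), ((j:ℝ) * a j^2) * ((ℓ:ℝ) * a ℓ^2)
        = ∑ j ∈ Finset.Icc 3 (m+1), ((j:ℝ) * a j^2) * ∑ ℓ ∈ Finset.Icc 2 (j-1), (ℓ:ℝ) * a ℓ^2 := by
          simp [Finset.mul_sum]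
      _ ≤ ∑ j ∈ Finset.Icc 3 (m+1), ((j:ℝ) * a j^2) * T2 := by
          refine Finset.sum_le_sum fun j hj => ?_
          refine mul_le_mul_of_nonneg_left ?_ (by positivity)
          refine Finset.sum_le_sum_of_subset_of_nonneg (Finset.Icc_subset_Icc_right ?_)
            (fun i _ _ => by positivity)
          rw [Finset.mem_Icc] at hj; omega
      _ = (∑ j ∈ Finset.Icc 3 (m+1), (j:ℝ) * a j^2) * T2 := by rw [Finset.sum_mul]
      _ ≤ T2 * T2 := by
          refine mul_le_mul_of_nonneg_right ?_ hT2
          exact Finset.sum_le_sum_of_subset_of_nonneg (Finset.Icc_subset_Icc_left (by omega))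
            (fun i _ _ => by positivity)
      _ = T2^2 := (sq T2).symm
  have hg : ∑ p ∈ P, (a (p.1 - p.2) / (Real.sqrt p.1 * Real.sqrt p.2))^2
      ≤ A2 * (Real.pi^2/6) := by
    have e2 : ∀ p ∈ P, (a (p.1-p.2) / (Real.sqrt p.1 * Real.sqrt p.2))^2
        = a (p.1-p.2)^2 / ((p.1:ℝ) * (p.2:ℝ)) := by
      intro p _
      rw [div_pow, mul_pow, Real.sq_sqrt (Nat.cast_nonneg _), Real.sq_sqrt (Nat.cast_nonneg _)]
    rw [Finset.sum_congr rfl e2]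
    have swap : ∑ p ∈ P, a (p.1-p.2)^2 / ((p.1:ℝ) * (p.2:ℝ))
        = ∑ q ∈ (Finset.Icc 2 m).sigma (fun ℓ => Finset.Icc (ℓ+1) (m+1)),
            a (q.2 - q.1)^2 / ((q.2:ℝ) * (q.1:ℝ)) := by
      refine Finset.sum_nbij' (fun p => ⟨p.2, p.1⟩) (fun q => ⟨q.2, q.1⟩) ?_ ?_ ?_ ?_ ?_
      · intro p hp
        have := hmem p hp
        simp only [Finset.mem_sigma, Finset.mem_Icc]
        omega
      · intro q hq
        rw [Finset.mem_sigma, Finset.mem_Icc, Finset.mem_Icc] at hq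
        simp only [hP, Finset.mem_sigma, Finset.mem_Icc]
        omega
      · intro p _; rfl
      · intro q _; rfl
      · intro p _; rfl
    rw [swap, Finset.sum_sigma]
    calc ∑ ℓ ∈ Finset.Icc 2 m, ∑ j ∈ Finset.Icc (ℓ+1) (m+1), a (j-ℓ)^2 / ((j:ℝ)*(ℓ:ℝ))
        ≤ ∑ ℓ ∈ Finset.Icc 2 m, ∑ j ∈ Finset.Icc (ℓ+1) (m+1), a (j-ℓ)^2 * (1/(ℓ:ℝ)^2) := by
          refine Finset.sum_le_sum fun ℓ hℓ => Finset.sum_le_sum fun j hj => ?_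
          rw [Finset.mem_Icc] at hℓ hj
          have hl0 : (0:ℝ) < (ℓ:ℝ)^2 := by
            have : 0 < ℓ := by omega
            positivity
          have hjl : ((ℓ:ℝ))^2 ≤ (j:ℝ)*(ℓ:ℝ) := by
            have h1 : (ℓ:ℝ) ≤ (j:ℝ) := by exact_mod_cast (by omega : ℓ ≤ j)
            have h2 : (0:ℝ) ≤ (ℓ:ℝ) := Nat.cast_nonneg _
            nlinarith
          calc a (j-ℓ)^2 / ((j:ℝ)*(ℓ:ℝ)) ≤ a (j-ℓ)^2 / ((ℓ:ℝ)^2) :=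
                div_le_div_of_nonneg_left (sq_nonneg _) hl0 hjl
            _ = a (j-ℓ)^2 * (1/(ℓ:ℝ)^2) := by ring
      _ = ∑ ℓ ∈ Finset.Icc 2 m, (∑ j ∈ Finset.Icc (ℓ+1) (m+1), a (j-ℓ)^2) * (1/(ℓ:ℝ)^2) := by
          simp [Finset.sum_mul]
      _ ≤ ∑ ℓ ∈ Finset.Icc 2 m, A2 * (1/(ℓ:ℝ)^2) := by
          refine Finset.sum_le_sum fun ℓ hℓ => ?_
          rw [Finset.mem_Icc] at hℓ
          refine mul_le_mul_of_nonneg_right ?_ (by positivity)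
          refine gch_aux_sum_comp_le (f := fun n => a n ^ 2) (fun n => sq_nonneg _) _ (fun j => j - ℓ)
            ?_ _ ?_
          · intro x hx y hy hxy
            simp only [Finset.coe_Icc, Set.mem_Icc] at hx hy
            simp only at hxy
            omega
          · intro x hx
            simp only [Finset.mem_Icc] at hx ⊢
            omega
      _ = A2 * ∑ ℓ ∈ Finset.Icc 2 m, 1/(ℓ:ℝ)^2 := by rw [Finset.mul_sum]
      _ ≤ A2 * (Real.pi^2/6) := mul_le_mul_of_nonneg_left (gch_aux_basel_sq _) hA2
  calc (∑ j ∈ Finset.Icc 3 (m + 1), ∑ ℓ ∈ Finset.Icc 2 (j - 1), a j * a ℓ * a (j - ℓ))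
      = ∑ p ∈ P, a p.1 * a p.2 * a (p.1 - p.2) := by rw [hP, Finset.sum_sigma]
    _ = ∑ p ∈ P, (Real.sqrt p.1 * a p.1 * (Real.sqrt p.2 * a p.2))
          * (a (p.1 - p.2) / (Real.sqrt p.1 * Real.sqrt p.2)) := by
        refine Finset.sum_congr rfl fun p hp => ?_
        obtain ⟨h3, hm1, h2, hj1⟩ := hmem p hp
        have s1 : (0:ℝ) < Real.sqrt p.1 := Real.sqrt_pos.mpr (by exact_mod_cast (by omega : 0 < p.1))
        have s2 : (0:ℝ) < Real.sqrt p.2 := Real.sqrt_pos.mpr (by exact_mod_cast (by omega : 0 < p.2))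
        field_simp
    _ ≤ Real.sqrt (∑ p ∈ P, (Real.sqrt p.1 * a p.1 * (Real.sqrt p.2 * a p.2))^2)
          * Real.sqrt (∑ p ∈ P, (a (p.1 - p.2) / (Real.sqrt p.1 * Real.sqrt p.2))^2) :=
        Real.sum_mul_le_sqrt_mul_sqrt _ _ _
    _ ≤ Real.sqrt (T2^2) * Real.sqrt (A2 * (Real.pi^2/6)) :=
        mul_le_mul (Real.sqrt_le_sqrt hf) (Real.sqrt_le_sqrt hg) (Real.sqrt_nonneg _)
          (Real.sqrt_nonneg _)
    _ = T2 * (Real.sqrt A2 * (Real.pi / Real.sqrt 6)) := by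
        rw [Real.sqrt_sq hT2, Real.sqrt_mul hA2, gch_aux_sqrt_pi_sq_six]
    _ = Real.pi / Real.sqrt 6 * Real.sqrt A2 * T2 := by ring

lemma gch_aux_part2 (m : ℕ) (a : ℕ → ℝ) (ha : ∀ j ∈ Finset.Icc 1 (m + 1), 0 ≤ a j) :
    (∑ j ∈ Finset.Icc 3 (m + 1), ∑ ℓ ∈ Finset.Icc 2 (j - 1),
        ((j : ℝ) - ℓ + 1) / ℓ * (a j * a (ℓ - 1) * a (j - ℓ + 1))) ≤
      Real.pi / Real.sqrt 6 * Real.sqrt (∑ j ∈ Finset.Icc 1 (m + 1), a j ^ 2) *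
        (∑ j ∈ Finset.Icc 2 (m + 1), (j : ℝ) * a j ^ 2) := by
  set A2 := ∑ j ∈ Finset.Icc 1 (m+1), a j ^ 2 with hA2def
  set T2 := ∑ j ∈ Finset.Icc 2 (m+1), (j:ℝ) * a j ^ 2 with hT2def
  have hA2 : 0 ≤ A2 := Finset.sum_nonneg fun i _ => sq_nonneg _
  have hT2 : 0 ≤ T2 := Finset.sum_nonneg fun i _ => by positivity
  set P := (Finset.Icc 3 (m+1)).sigma (fun j => Finset.Icc 2 (j-1)) with hP
  set Q := (Finset.Icc 1 (m-1)).sigma (fun n => Finset.Icc 2 (m+1-n)) with hQ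
  have hmem : ∀ p ∈ P, 3 ≤ p.1 ∧ p.1 ≤ m+1 ∧ 2 ≤ p.2 ∧ p.2 ≤ p.1 - 1 := by
    intro p hp
    rw [hP, Finset.mem_sigma, Finset.mem_Icc, Finset.mem_Icc] at hp
    exact ⟨hp.1.1, hp.1.2, hp.2.1, hp.2.2⟩
  -- reindex
  have reindex : (∑ j ∈ Finset.Icc 3 (m + 1), ∑ ℓ ∈ Finset.Icc 2 (j - 1),
        ((j : ℝ) - ℓ + 1) / ℓ * (a j * a (ℓ - 1) * a (j - ℓ + 1)))
      = ∑ n ∈ Finset.Icc 1 (m-1), ∑ k ∈ Finset.Icc 2 (m+1-n),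
          (k:ℝ)/((n:ℝ)+1) * (a (k+n) * a n * a k) := by
    rw [← Finset.sum_sigma (f := fun p : Σ _ : ℕ, ℕ =>
        ((p.1 : ℝ) - p.2 + 1) / p.2 * (a p.1 * a (p.2 - 1) * a (p.1 - p.2 + 1)))]
    rw [← Finset.sum_sigma (f := fun q : Σ _ : ℕ, ℕ =>
        (q.2:ℝ)/((q.1:ℝ)+1) * (a (q.2+q.1) * a q.1 * a q.2))]
    refine Finset.sum_nbij' (fun p => ⟨p.2 - 1, p.1 - p.2 + 1⟩)
      (fun q => ⟨q.2 + q.1, q.1 + 1⟩) ?_ ?_ ?_ ?_ ?_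
    · intro p hp
      have := hmem p hp
      simp only [hQ, Finset.mem_sigma, Finset.mem_Icc]
      omega
    · intro q hq
      simp only [Finset.mem_sigma, Finset.mem_Icc] at hq ⊢
      omega
    · intro p hp
      have := hmem p hp
      obtain ⟨j, ℓ⟩ := p
      simp only [Sigma.mk.inj_iff, heq_eq_eq] at *
      omega
    · intro q hq
      obtain ⟨n, k⟩ := q
      simp only [Finset.mem_sigma, Finset.mem_Icc] at hq
      simp only [Sigma.mk.inj_iff, heq_eq_eq]
      omega
    · intro p hp
      obtain ⟨h3, hm1, h2, hj1⟩ := hmem p hp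
      obtain ⟨j, ℓ⟩ := p
      simp only at h3 hm1 h2 hj1 ⊢
      have e1 : j - ℓ + 1 + (ℓ - 1) = j := by omega
      have e2 : ((j - ℓ + 1 : ℕ):ℝ) = (j:ℝ) - ℓ + 1 := by
        have h : ℓ ≤ j := by omega
        rw [Nat.cast_add, Nat.cast_sub h]
        norm_num
      have e3 : ((ℓ - 1 : ℕ):ℝ) + 1 = (ℓ:ℝ) := by
        have h : 1 ≤ ℓ := by omega
        rw [Nat.cast_sub h]
        norm_num
      rw [e1, e2, e3]
  rw [reindex]
  have inner_le : ∀ n ∈ Finset.Icc 1 (m-1),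
      (∑ k ∈ Finset.Icc 2 (m+1-n), (k:ℝ)/((n:ℝ)+1) * (a (k+n) * a n * a k))
        ≤ a n * (1/((n:ℝ)+1)) * T2 := by
    intro n hn
    rw [Finset.mem_Icc] at hn
    have han : 0 ≤ a n := ha n (Finset.mem_Icc.mpr ⟨by omega, by omega⟩)
    have J_le : ∑ k ∈ Finset.Icc 2 (m+1-n), (k:ℝ) * a (k+n) * a k ≤ T2 := by
      calc ∑ k ∈ Finset.Icc 2 (m+1-n), (k:ℝ) * a (k+n) * a k
          ≤ ∑ k ∈ Finset.Icc 2 (m+1-n),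
              (Real.sqrt k * a k) * (Real.sqrt (k+n) * a (k+n)) := by
            refine Finset.sum_le_sum fun k hk => ?_
            rw [Finset.mem_Icc] at hk
            have hak : 0 ≤ a k := ha k (Finset.mem_Icc.mpr ⟨by omega, by omega⟩)
            have hakn : 0 ≤ a (k+n) := ha (k+n) (Finset.mem_Icc.mpr ⟨by omega, by omega⟩)
            have hs : Real.sqrt k ≤ Real.sqrt (k+n) :=
              Real.sqrt_le_sqrt (by exact_mod_cast Nat.le_add_right k n)
            have h1 : (k:ℝ) ≤ Real.sqrt k * Real.sqrt ((k:ℝ)+(n:ℝ)) := by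
              calc (k:ℝ) = Real.sqrt k * Real.sqrt k :=
                    (Real.mul_self_sqrt (Nat.cast_nonneg _)).symm
                _ ≤ Real.sqrt k * Real.sqrt ((k:ℝ)+(n:ℝ)) :=
                    mul_le_mul_of_nonneg_left hs (Real.sqrt_nonneg _)
            calc (k:ℝ) * a (k+n) * a k = (k:ℝ) * (a (k+n) * a k) := by ring
              _ ≤ (Real.sqrt k * Real.sqrt ((k:ℝ)+(n:ℝ))) * (a (k+n) * a k) :=
                  mul_le_mul_of_nonneg_right h1 (mul_nonneg hakn hak)
              _ = (Real.sqrt k * a k) * (Real.sqrt (k+n) * a (k+n)) := by ring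
        _ ≤ Real.sqrt (∑ k ∈ Finset.Icc 2 (m+1-n), (Real.sqrt k * a k)^2)
              * Real.sqrt (∑ k ∈ Finset.Icc 2 (m+1-n), (Real.sqrt (k+n) * a (k+n))^2) :=
            Real.sum_mul_le_sqrt_mul_sqrt _ _ _
        _ ≤ Real.sqrt T2 * Real.sqrt T2 := by
            have b1 : ∑ k ∈ Finset.Icc 2 (m+1-n), (Real.sqrt k * a k)^2 ≤ T2 := by
              have e : ∀ k ∈ Finset.Icc 2 (m+1-n),
                  (Real.sqrt k * a k)^2 = (k:ℝ) * a k ^2 := by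
                intro k _
                rw [mul_pow, Real.sq_sqrt (Nat.cast_nonneg _)]
              rw [Finset.sum_congr rfl e]
              exact Finset.sum_le_sum_of_subset_of_nonneg
                (Finset.Icc_subset_Icc_right (by omega)) (fun i _ _ => by positivity)
            have b2 : ∑ k ∈ Finset.Icc 2 (m+1-n), (Real.sqrt (k+n) * a (k+n))^2 ≤ T2 := by
              have e : ∀ k ∈ Finset.Icc 2 (m+1-n),
                  (Real.sqrt (k+n) * a (k+n))^2 = ((k+n:ℕ):ℝ) * a (k+n) ^2 := by
                intro k _
                rw [mul_pow, Real.sq_sqrt (by positivity : (0:ℝ) ≤ (k:ℝ)+(n:ℝ))]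
                push_cast
                ring
              rw [Finset.sum_congr rfl e]
              refine gch_aux_sum_comp_le (f := fun i => (i:ℝ) * a i ^2) (fun i => by positivity)
                _ (fun k => k + n) ?_ (Finset.Icc 2 (m+1)) ?_
              · intro x hx y hy hxy
                simp only at hxy
                omega
              · intro x hx
                simp only [Finset.mem_Icc] at hx ⊢
                omega
            exact mul_le_mul (Real.sqrt_le_sqrt b1) (Real.sqrt_le_sqrt b2)
              (Real.sqrt_nonneg _) (Real.sqrt_nonneg _)
        _ = T2 := Real.mul_self_sqrt hT2
    calc ∑ k ∈ Finset.Icc 2 (m+1-n), (k:ℝ)/((n:ℝ)+1) * (a (k+n) * a n * a k)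
        = (a n /((n:ℝ)+1)) * ∑ k ∈ Finset.Icc 2 (m+1-n), (k:ℝ) * a (k+n) * a k := by
          rw [Finset.mul_sum]
          refine Finset.sum_congr rfl fun k _ => ?_
          ring
      _ ≤ (a n /((n:ℝ)+1)) * T2 := by
          refine mul_le_mul_of_nonneg_left J_le (by positivity)
      _ = a n * (1/((n:ℝ)+1)) * T2 := by ring
  calc ∑ n ∈ Finset.Icc 1 (m-1), ∑ k ∈ Finset.Icc 2 (m+1-n),
          (k:ℝ)/((n:ℝ)+1) * (a (k+n) * a n * a k)
      ≤ ∑ n ∈ Finset.Icc 1 (m-1), a n * (1/((n:ℝ)+1)) * T2 :=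
        Finset.sum_le_sum inner_le
    _ = (∑ n ∈ Finset.Icc 1 (m-1), a n * (1/((n:ℝ)+1))) * T2 := by rw [Finset.sum_mul]
    _ ≤ (Real.sqrt (∑ n ∈ Finset.Icc 1 (m-1), a n ^2)
          * Real.sqrt (∑ n ∈ Finset.Icc 1 (m-1), (1/((n:ℝ)+1))^2)) * T2 :=
        mul_le_mul_of_nonneg_right (Real.sum_mul_le_sqrt_mul_sqrt _ _ _) hT2
    _ ≤ (Real.sqrt A2 * Real.sqrt (Real.pi^2/6)) * T2 := by
        refine mul_le_mul_of_nonneg_right (mul_le_mul ?_ ?_ (Real.sqrt_nonneg _)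
          (Real.sqrt_nonneg _)) hT2
        · refine Real.sqrt_le_sqrt ?_
          exact Finset.sum_le_sum_of_subset_of_nonneg
            (Finset.Icc_subset_Icc (by omega) (by omega)) (fun i _ _ => sq_nonneg _)
        · refine Real.sqrt_le_sqrt ?_
          have e : ∀ n ∈ Finset.Icc 1 (m-1),
              (1/((n:ℝ)+1))^2 = (1:ℝ)/(((n+1:ℕ)):ℝ)^2 := by
            intro n _
            push_cast
            rw [div_pow]
            norm_num
          rw [Finset.sum_congr rfl e]
          refine le_trans (gch_aux_sum_comp_le (f := fun p => (1:ℝ)/(p:ℝ)^2)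
            (fun p => by positivity) _ (fun n => n + 1) ?_ (Finset.Icc 2 m) ?_) (gch_aux_basel_sq _)
          · intro x hx y hy hxy
            simp only at hxy
            omega
          · intro x hx
            simp only [Finset.mem_Icc] at hx ⊢
            omega
    _ = Real.pi / Real.sqrt 6 * Real.sqrt A2 * T2 := by
        rw [gch_aux_sqrt_pi_sq_six]
        ring

/-- the Cauchy-Schwarz-type double-sum estimates for a single sequence. -/
theorem appendix_a (m : ℕ) (hm : 1 ≤ m) (a : ℕ → ℝ)
    (ha : ∀ j ∈ Finset.Icc 1 (m + 1), 0 ≤ a j) :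
    (∑ j ∈ Finset.Icc 3 (m + 1), ∑ ℓ ∈ Finset.Icc 2 (j - 1), a j * a ℓ * a (j - ℓ)) ≤
      Real.pi / Real.sqrt 6 * Real.sqrt (∑ j ∈ Finset.Icc 1 (m + 1), a j ^ 2) *
        Real.sqrt (∑ j ∈ Finset.Icc 2 (m + 1), (j : ℝ) * a j ^ 2) ^ 2 ∧
    (∑ j ∈ Finset.Icc 3 (m + 1), ∑ ℓ ∈ Finset.Icc 2 (j - 1),
        ((j : ℝ) - ℓ + 1) / ℓ * (a j * a (ℓ - 1) * a (j - ℓ + 1))) ≤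
      Real.pi / Real.sqrt 6 * Real.sqrt (∑ j ∈ Finset.Icc 1 (m + 1), a j ^ 2) *
        Real.sqrt (∑ j ∈ Finset.Icc 2 (m + 1), (j : ℝ) * a j ^ 2) ^ 2 := by
  have hT2 : (0:ℝ) ≤ ∑ j ∈ Finset.Icc 2 (m+1), (j:ℝ) * a j ^ 2 :=
    Finset.sum_nonneg fun i _ => by positivity
  rw [Real.sq_sqrt hT2]
  exact ⟨gch_aux_part1 m a ha, gch_aux_part2 m a ha⟩

end GCH
end
end

section
/- Let m ≥ 1 be an integer, and let a₁, …, a_{m+1} and b₀, …, b_m be nonnegative real numbers. Set A = (Σ_{j=1}^{m+1} a_j²)^{1/2}, Ã = (Σ_{j=2}^{m+1} j a_j²)^{1/2}, B = (Σ_{j=0}^{m} b_j²)^{1/2}, B̃ = (Σ_{j=1}^{m} j b_j²)^{1/2}. Then: (1) Σ_{j=2}^{m+1} Σ_{ℓ=1}^{j−1} (1/j) a_j b_ℓ b_{j−ℓ−1} ≤ (π/√6) Ã B B̃; (2) Σ_{j=2}^{m} Σ_{ℓ=2}^{j} a_ℓ b_j b_{j−ℓ} ≤ (π/√6) Ã B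 B̃; (3) Σ_{j=2}^{m} Σ_{ℓ=2}^{j} ((j−ℓ+1)/ℓ) a_{ℓ−1} b_j b_{j−ℓ+1} ≤ (π/√6) A B̃²; (4) Σ_{j=3}^{m} Σ_{ℓ=2}^{j−1} a_{j−ℓ} b_j b_ℓ ≤ (π/√6) A B̃²; (5) Σ_{j=3}^{m} Σ_{ℓ=2}^{j−1} ((j−ℓ+1)/ℓ) a_{j−ℓ+1} b_j b_{ℓ−1} ≤ (π/√6) Ã B B̃. -/
open MeasureTheory Filter
open scoped ENNReal Topology

noncomputable section
namespace GCH

private lemma cs2 (s : Finset ℕ) (t : ℕ → Finset ℕ) (F x y : ℕ → ℕ → ℝ) (P Q : ℝ)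
    (hxy : ∀ j ∈ s, ∀ ℓ ∈ t j, F j ℓ ≤ x j ℓ * y j ℓ)
    (hx : ∑ j ∈ s, ∑ ℓ ∈ t j, x j ℓ ^ 2 ≤ P)
    (hy : ∑ j ∈ s, ∑ ℓ ∈ t j, y j ℓ ^ 2 ≤ Q) :
    ∑ j ∈ s, ∑ ℓ ∈ t j, F j ℓ ≤ Real.sqrt P * Real.sqrt Q := by
  have h1 : ∑ j ∈ s, ∑ ℓ ∈ t j, F j ℓ ≤ ∑ j ∈ s, ∑ ℓ ∈ t j, x j ℓ * y j ℓ :=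
    Finset.sum_le_sum fun j hj => Finset.sum_le_sum fun ℓ hℓ => hxy j hj ℓ hℓ
  have h2 : ∑ p ∈ s.sigma t, x p.1 p.2 * y p.1 p.2 ≤
      Real.sqrt (∑ p ∈ s.sigma t, x p.1 p.2 ^ 2) * Real.sqrt (∑ p ∈ s.sigma t, y p.1 p.2 ^ 2) :=
    Real.sum_mul_le_sqrt_mul_sqrt _ _ _
  rw [Finset.sum_sigma, Finset.sum_sigma, Finset.sum_sigma] at h2
  exact (h1.trans h2).trans (mul_le_mul (Real.sqrt_le_sqrt hx) (Real.sqrt_le_sqrt hy)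
    (Real.sqrt_nonneg _) (Real.sqrt_nonneg _))

private lemma sum_comp_le (c : ℕ → ℝ) (hc : ∀ k, 0 ≤ c k) (t u : Finset ℕ) (g : ℕ → ℕ)
    (hg : Set.InjOn g t) (hmap : ∀ ℓ ∈ t, g ℓ ∈ u) :
    ∑ ℓ ∈ t, c (g ℓ) ≤ ∑ k ∈ u, c k := by
  rw [← Finset.sum_image (fun p hp q hq => hg hp hq)]
  exact Finset.sum_le_sum_of_subset_of_nonneg
    (fun k hk => by obtain ⟨ℓ, hℓ, rfl⟩ := Finset.mem_image.mp hk; exact hmap ℓ hℓ)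
    (fun k _ _ => hc k)

private lemma basel (s : Finset ℕ) : ∑ j ∈ s, (1 : ℝ) / (j : ℝ) ^ 2 ≤ Real.pi ^ 2 / 6 :=
  sum_le_hasSum s (fun i _ => by positivity) hasSum_zeta_two

private lemma swap_tri (a m : ℕ) (f : ℕ → ℕ → ℝ) :
    ∑ j ∈ Finset.Icc a m, ∑ ℓ ∈ Finset.Icc a j, f j ℓ
      = ∑ ℓ ∈ Finset.Icc a m, ∑ j ∈ Finset.Icc ℓ m, f j ℓ := by
  rw [Finset.sum_sigma', Finset.sum_sigma']
  refine Finset.sum_nbij' (fun p => ⟨p.2, p.1⟩) (fun p => ⟨p.2, p.1⟩) ?_ ?_ ?_ ?_ ?_ <;>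
    simp only [Finset.mem_sigma, Finset.mem_Icc] <;> intros <;> first | omega | trivial

private lemma swap_tri' (m : ℕ) (f : ℕ → ℕ → ℝ) :
    ∑ j ∈ Finset.Icc 3 m, ∑ ℓ ∈ Finset.Icc 2 (j - 1), f j ℓ
      = ∑ ℓ ∈ Finset.Icc 2 m, ∑ j ∈ Finset.Icc (ℓ + 1) m, f j ℓ := by
  rw [Finset.sum_sigma', Finset.sum_sigma']
  refine Finset.sum_nbij' (fun p => ⟨p.2, p.1⟩) (fun p => ⟨p.2, p.1⟩) ?_ ?_ ?_ ?_ ?_ <;>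
    simp only [Finset.mem_sigma, Finset.mem_Icc] <;> intros <;> first | omega | trivial

private lemma sqrt_sq_mul_sq (u v : ℝ) (hu : 0 ≤ u) (hv : 0 ≤ v) :
    Real.sqrt (u ^ 2 * v ^ 2) = u * v := by
  rw [← mul_pow, Real.sqrt_sq (mul_nonneg hu hv)]

private lemma sqrt_pi6 (v : ℝ) (hv : 0 ≤ v) :
    Real.sqrt (Real.pi ^ 2 / 6 * v ^ 2) = Real.pi / Real.sqrt 6 * v := by
  have h6 : Real.sqrt 6 ^ 2 = 6 := Real.sq_sqrt (by norm_num)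
  have h : Real.pi ^ 2 / 6 * v ^ 2 = (Real.pi / Real.sqrt 6 * v) ^ 2 := by
    rw [mul_pow, div_pow, h6]
  rw [h, Real.sqrt_sq (mul_nonneg (div_nonneg Real.pi_nonneg (Real.sqrt_nonneg 6)) hv)]

private lemma div_le_div_right' {x y c : ℝ} (h : x ≤ y) (hc : 0 ≤ c) : x / c ≤ y / c := by
  rw [div_eq_mul_inv, div_eq_mul_inv]
  exact mul_le_mul_of_nonneg_right h (inv_nonneg.mpr hc)

private lemma hy_bound (m : ℕ) (b : ℕ → ℝ) (Btil : ℝ)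
    (hBt2 : Btil ^ 2 = ∑ j ∈ Finset.Icc 1 m, (j : ℝ) * b j ^ 2)
    (s : Finset ℕ) (hs : s ⊆ Finset.Icc 1 m) (t : ℕ → Finset ℕ) :
    ∑ j ∈ s, ∑ ℓ ∈ t j, (Real.sqrt j * b j / ℓ) ^ 2 ≤ Real.pi ^ 2 / 6 * Btil ^ 2 := by
  calc ∑ j ∈ s, ∑ ℓ ∈ t j, (Real.sqrt j * b j / ℓ) ^ 2
      ≤ ∑ j ∈ s, Real.pi ^ 2 / 6 * ((j : ℝ) * b j ^ 2) := by
        refine Finset.sum_le_sum fun j hj => ?_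
        have e : ∀ ℓ ∈ t j, (Real.sqrt j * b j / ℓ) ^ 2 = 1 / (ℓ : ℝ) ^ 2 * ((j : ℝ) * b j ^ 2) :=
          fun ℓ _ => by rw [div_pow, mul_pow, Real.sq_sqrt (Nat.cast_nonneg j)]; ring
        rw [Finset.sum_congr rfl e, ← Finset.sum_mul]
        exact mul_le_mul_of_nonneg_right (basel _) (by positivity)
    _ = Real.pi ^ 2 / 6 * ∑ j ∈ s, (j : ℝ) * b j ^ 2 := by rw [Finset.mul_sum]
    _ ≤ Real.pi ^ 2 / 6 * Btil ^ 2 := by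
        rw [hBt2]
        exact mul_le_mul_of_nonneg_left
          (Finset.sum_le_sum_of_subset_of_nonneg hs (fun k _ _ => by positivity)) (by positivity)

set_option maxHeartbeats 2000000

/-- the Cauchy-Schwarz-type double-sum estimates mixing two sequences. -/
theorem appendix_b (m : ℕ) (hm : 1 ≤ m) (a b : ℕ → ℝ)
    (ha : ∀ j ∈ Finset.Icc 1 (m + 1), 0 ≤ a j)
    (hb : ∀ j ∈ Finset.range (m + 1), 0 ≤ b j) :
    ∀ A Atil B Btil : ℝ,
      A = Real.sqrt (∑ j ∈ Finset.Icc 1 (m + 1), a j ^ 2) →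
      Atil = Real.sqrt (∑ j ∈ Finset.Icc 2 (m + 1), (j : ℝ) * a j ^ 2) →
      B = Real.sqrt (∑ j ∈ Finset.range (m + 1), b j ^ 2) →
      Btil = Real.sqrt (∑ j ∈ Finset.Icc 1 m, (j : ℝ) * b j ^ 2) →
      (∑ j ∈ Finset.Icc 2 (m + 1), ∑ ℓ ∈ Finset.Icc 1 (j - 1),
          (1 / (j : ℝ)) * (a j * b ℓ * b (j - ℓ - 1))) ≤
        Real.pi / Real.sqrt 6 * Atil * B * Btil ∧
      (∑ j ∈ Finset.Icc 2 m, ∑ ℓ ∈ Finset.Icc 2 j, a ℓ * b j * b (j - ℓ)) ≤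
        Real.pi / Real.sqrt 6 * Atil * B * Btil ∧
      (∑ j ∈ Finset.Icc 2 m, ∑ ℓ ∈ Finset.Icc 2 j,
          ((j : ℝ) - ℓ + 1) / ℓ * (a (ℓ - 1) * b j * b (j - ℓ + 1))) ≤
        Real.pi / Real.sqrt 6 * A * Btil ^ 2 ∧
      (∑ j ∈ Finset.Icc 3 m, ∑ ℓ ∈ Finset.Icc 2 (j - 1), a (j - ℓ) * b j * b ℓ) ≤
        Real.pi / Real.sqrt 6 * A * Btil ^ 2 ∧
      (∑ j ∈ Finset.Icc 3 m, ∑ ℓ ∈ Finset.Icc 2 (j - 1),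
          ((j : ℝ) - ℓ + 1) / ℓ * (a (j - ℓ + 1) * b j * b (ℓ - 1))) ≤
        Real.pi / Real.sqrt 6 * Atil * B * Btil := by
  intro A Atil B Btil hA hAt hB hBt
  have hA0 : 0 ≤ A := hA ▸ Real.sqrt_nonneg _
  have hAt0 : 0 ≤ Atil := hAt ▸ Real.sqrt_nonneg _
  have hB0 : 0 ≤ B := hB ▸ Real.sqrt_nonneg _
  have hBt0 : 0 ≤ Btil := hBt ▸ Real.sqrt_nonneg _
  have hA2 : A ^ 2 = ∑ j ∈ Finset.Icc 1 (m + 1), a j ^ 2 := by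
    rw [hA, Real.sq_sqrt (Finset.sum_nonneg fun i _ => sq_nonneg _)]
  have hAt2 : Atil ^ 2 = ∑ j ∈ Finset.Icc 2 (m + 1), (j : ℝ) * a j ^ 2 := by
    rw [hAt, Real.sq_sqrt (Finset.sum_nonneg fun i _ => by positivity)]
  have hB2 : B ^ 2 = ∑ j ∈ Finset.range (m + 1), b j ^ 2 := by
    rw [hB, Real.sq_sqrt (Finset.sum_nonneg fun i _ => sq_nonneg _)]
  have hBt2 : Btil ^ 2 = ∑ j ∈ Finset.Icc 1 m, (j : ℝ) * b j ^ 2 := by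
    rw [hBt, Real.sq_sqrt (Finset.sum_nonneg fun i _ => by positivity)]
  have hb' : ∀ k : ℕ, k ≤ m → 0 ≤ b k := fun k hk => hb k (Finset.mem_range.mpr (by omega))
  have ha' : ∀ k : ℕ, 1 ≤ k → k ≤ m + 1 → 0 ≤ a k := fun k h1 h2 =>
    ha k (Finset.mem_Icc.mpr ⟨h1, h2⟩)
  refine ⟨?_, ?_, ?_, ?_, ?_⟩
  · -- Part 1
    refine le_trans (cs2 (Finset.Icc 2 (m + 1)) (fun j => Finset.Icc 1 (j - 1))
      (fun j ℓ => 1 / (j : ℝ) * (a j * b ℓ * b (j - ℓ - 1)))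
      (fun j ℓ => Real.sqrt j * a j * b (j - ℓ - 1) / ℓ)
      (fun j ℓ => Real.sqrt ℓ * b ℓ / j)
      (Atil ^ 2 * B ^ 2) (Real.pi ^ 2 / 6 * Btil ^ 2) ?_ ?_ ?_) ?_
    · intro j hj ℓ hℓ
      simp only [Finset.mem_Icc] at hj hℓ
      have hl0 : (0 : ℝ) < ℓ := Nat.cast_pos.mpr (by omega)
      have hle : (ℓ : ℝ) ≤ (j : ℝ) := by exact_mod_cast (by omega : ℓ ≤ j)
      have hprod : 0 ≤ a j * b ℓ * b (j - ℓ - 1) :=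
        mul_nonneg (mul_nonneg (ha' j (by omega) hj.2) (hb' ℓ (by omega))) (hb' _ (by omega))
      have hcoef : (ℓ : ℝ) ≤ Real.sqrt j * Real.sqrt ℓ := by
        calc (ℓ : ℝ) = Real.sqrt ((ℓ : ℝ) * ℓ) := (Real.sqrt_mul_self hl0.le).symm
          _ ≤ Real.sqrt ((j : ℝ) * ℓ) := Real.sqrt_le_sqrt (mul_le_mul_of_nonneg_right hle hl0.le)
          _ = Real.sqrt j * Real.sqrt ℓ := Real.sqrt_mul (Nat.cast_nonneg j) _
      have e1 : Real.sqrt j * a j * b (j - ℓ - 1) / ℓ * (Real.sqrt ℓ * b ℓ / j)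
          = Real.sqrt j * Real.sqrt ℓ * (a j * b ℓ * b (j - ℓ - 1)) / ((ℓ : ℝ) * j) := by ring
      have e2 : 1 / (j : ℝ) * (a j * b ℓ * b (j - ℓ - 1))
          = (ℓ : ℝ) * (a j * b ℓ * b (j - ℓ - 1)) / ((ℓ : ℝ) * j) := by
        have hj0 : (j : ℝ) ≠ 0 := ne_of_gt (Nat.cast_pos.mpr (by omega))
        have hl0' : (ℓ : ℝ) ≠ 0 := ne_of_gt hl0
        field_simp
      rw [e1, e2]
      exact div_le_div_right' (mul_le_mul_of_nonneg_right hcoef hprod) (by positivity)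
    · calc ∑ j ∈ Finset.Icc 2 (m + 1), ∑ ℓ ∈ Finset.Icc 1 (j - 1),
            (Real.sqrt j * a j * b (j - ℓ - 1) / ℓ) ^ 2
          ≤ ∑ j ∈ Finset.Icc 2 (m + 1), (j : ℝ) * a j ^ 2 * B ^ 2 := by
            refine Finset.sum_le_sum fun j hj => ?_
            simp only [Finset.mem_Icc] at hj
            calc ∑ ℓ ∈ Finset.Icc 1 (j - 1), (Real.sqrt j * a j * b (j - ℓ - 1) / ℓ) ^ 2
                ≤ ∑ ℓ ∈ Finset.Icc 1 (j - 1), (j : ℝ) * a j ^ 2 * b (j - ℓ - 1) ^ 2 := by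
                  refine Finset.sum_le_sum fun ℓ hℓ => ?_
                  simp only [Finset.mem_Icc] at hℓ
                  have h1 : (1 : ℝ) ≤ (ℓ : ℝ) ^ 2 := by
                    have : (1 : ℝ) ≤ (ℓ : ℝ) := by exact_mod_cast hℓ.1
                    nlinarith
                  have e : (Real.sqrt j * a j * b (j - ℓ - 1) / ℓ) ^ 2
                      = Real.sqrt (j : ℝ) ^ 2 * a j ^ 2 * b (j - ℓ - 1) ^ 2 / (ℓ : ℝ) ^ 2 := by
                    ring
                  rw [e, Real.sq_sqrt (Nat.cast_nonneg j)]
                  exact div_le_self (by positivity) h1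
              _ = (j : ℝ) * a j ^ 2 * ∑ ℓ ∈ Finset.Icc 1 (j - 1), b (j - ℓ - 1) ^ 2 := by
                  rw [Finset.mul_sum]
              _ ≤ (j : ℝ) * a j ^ 2 * B ^ 2 := by
                  refine mul_le_mul_of_nonneg_left ?_ (by positivity)
                  rw [hB2]
                  exact sum_comp_le (fun k => b k ^ 2) (fun k => sq_nonneg _) _ _
                    (fun ℓ => j - ℓ - 1)
                    (fun p hp q hq h => by
                      simp only [Finset.coe_Icc, Set.mem_Icc] at hp hq; dsimp only at h; omega)
                    (fun ℓ hℓ => by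
                      simp only [Finset.mem_Icc] at hℓ; exact Finset.mem_range.mpr (by omega))
        _ = Atil ^ 2 * B ^ 2 := by rw [← Finset.sum_mul, ← hAt2]
    · calc ∑ j ∈ Finset.Icc 2 (m + 1), ∑ ℓ ∈ Finset.Icc 1 (j - 1), (Real.sqrt ℓ * b ℓ / j) ^ 2
          ≤ ∑ j ∈ Finset.Icc 2 (m + 1), 1 / (j : ℝ) ^ 2 * Btil ^ 2 := by
            refine Finset.sum_le_sum fun j hj => ?_
            simp only [Finset.mem_Icc] at hj
            have e : ∀ ℓ ∈ Finset.Icc 1 (j - 1), (Real.sqrt ℓ * b ℓ / j) ^ 2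
                = 1 / (j : ℝ) ^ 2 * ((ℓ : ℝ) * b ℓ ^ 2) := fun ℓ _ => by
              rw [div_pow, mul_pow, Real.sq_sqrt (Nat.cast_nonneg ℓ)]; ring
            rw [Finset.sum_congr rfl e, ← Finset.mul_sum]
            refine mul_le_mul_of_nonneg_left ?_ (by positivity)
            rw [hBt2]
            exact Finset.sum_le_sum_of_subset_of_nonneg
              (Finset.Icc_subset_Icc le_rfl (by omega)) (fun k _ _ => by positivity)
        _ = (∑ j ∈ Finset.Icc 2 (m + 1), 1 / (j : ℝ) ^ 2) * Btil ^ 2 := by rw [Finset.sum_mul]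
        _ ≤ Real.pi ^ 2 / 6 * Btil ^ 2 :=
            mul_le_mul_of_nonneg_right (basel _) (by positivity)
    · rw [sqrt_sq_mul_sq _ _ hAt0 hB0, sqrt_pi6 _ hBt0]; exact le_of_eq (by ring)
  · -- Part 2
    refine le_trans (cs2 (Finset.Icc 2 m) (fun j => Finset.Icc 2 j)
      (fun j ℓ => a ℓ * b j * b (j - ℓ))
      (fun j ℓ => Real.sqrt ℓ * a ℓ * b (j - ℓ))
      (fun j ℓ => b j / Real.sqrt ℓ)
      (Atil ^ 2 * B ^ 2) (Real.pi ^ 2 / 6 * Btil ^ 2) ?_ ?_ ?_) ?_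
    · intro j hj ℓ hℓ
      simp only [Finset.mem_Icc] at hj hℓ
      have hl0 : Real.sqrt ℓ ≠ 0 := ne_of_gt (Real.sqrt_pos.mpr (Nat.cast_pos.mpr (by omega)))
      refine le_of_eq ?_
      field_simp
    · rw [swap_tri 2 m]
      calc ∑ ℓ ∈ Finset.Icc 2 m, ∑ j ∈ Finset.Icc ℓ m, (Real.sqrt ℓ * a ℓ * b (j - ℓ)) ^ 2
          ≤ ∑ ℓ ∈ Finset.Icc 2 m, (ℓ : ℝ) * a ℓ ^ 2 * B ^ 2 := by
            refine Finset.sum_le_sum fun ℓ hℓ => ?_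
            simp only [Finset.mem_Icc] at hℓ
            have e : ∀ j ∈ Finset.Icc ℓ m, (Real.sqrt ℓ * a ℓ * b (j - ℓ)) ^ 2
                = (ℓ : ℝ) * a ℓ ^ 2 * b (j - ℓ) ^ 2 := fun j _ => by
              rw [mul_pow, mul_pow, Real.sq_sqrt (Nat.cast_nonneg ℓ)]
            rw [Finset.sum_congr rfl e, ← Finset.mul_sum]
            refine mul_le_mul_of_nonneg_left ?_ (by positivity)
            rw [hB2]
            exact sum_comp_le (fun k => b k ^ 2) (fun k => sq_nonneg _) _ _ (fun j => j - ℓ)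
              (fun p hp q hq h => by simp only [Finset.coe_Icc, Set.mem_Icc] at hp hq; dsimp only at h; omega)
              (fun j hj => by
                simp only [Finset.mem_Icc] at hj; exact Finset.mem_range.mpr (by omega))
        _ ≤ Atil ^ 2 * B ^ 2 := by
            rw [← Finset.sum_mul, hAt2]
            exact mul_le_mul_of_nonneg_right
              (Finset.sum_le_sum_of_subset_of_nonneg
                (Finset.Icc_subset_Icc le_rfl (by omega)) (fun k _ _ => by positivity))
              (by positivity)
    · calc ∑ j ∈ Finset.Icc 2 m, ∑ ℓ ∈ Finset.Icc 2 j, (b j / Real.sqrt ℓ) ^ 2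
          ≤ ∑ j ∈ Finset.Icc 2 m, Real.pi ^ 2 / 6 * ((j : ℝ) * b j ^ 2) := by
            refine Finset.sum_le_sum fun j hj => ?_
            simp only [Finset.mem_Icc] at hj
            calc ∑ ℓ ∈ Finset.Icc 2 j, (b j / Real.sqrt ℓ) ^ 2
                ≤ ∑ ℓ ∈ Finset.Icc 2 j, 1 / (ℓ : ℝ) ^ 2 * ((j : ℝ) * b j ^ 2) := by
                  refine Finset.sum_le_sum fun ℓ hℓ => ?_
                  simp only [Finset.mem_Icc] at hℓ
                  have hl0 : (0 : ℝ) < (ℓ : ℝ) := Nat.cast_pos.mpr (by omega)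
                  have hlj : (ℓ : ℝ) ≤ (j : ℝ) := by exact_mod_cast hℓ.2
                  have e : (b j / Real.sqrt ℓ) ^ 2 = b j ^ 2 * (1 / (ℓ : ℝ)) := by
                    rw [div_pow, Real.sq_sqrt (Nat.cast_nonneg ℓ)]; ring
                  rw [e]
                  have h1 : 1 / (ℓ : ℝ) ≤ (j : ℝ) / (ℓ : ℝ) ^ 2 := by
                    rw [div_le_div_iff₀ hl0 (by positivity)]
                    nlinarith
                  calc b j ^ 2 * (1 / (ℓ : ℝ)) ≤ b j ^ 2 * ((j : ℝ) / (ℓ : ℝ) ^ 2) :=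
                      mul_le_mul_of_nonneg_left h1 (sq_nonneg _)
                    _ = 1 / (ℓ : ℝ) ^ 2 * ((j : ℝ) * b j ^ 2) := by ring
              _ = (∑ ℓ ∈ Finset.Icc 2 j, 1 / (ℓ : ℝ) ^ 2) * ((j : ℝ) * b j ^ 2) := by
                  rw [Finset.sum_mul]
              _ ≤ Real.pi ^ 2 / 6 * ((j : ℝ) * b j ^ 2) :=
                  mul_le_mul_of_nonneg_right (basel _) (by positivity)
        _ = Real.pi ^ 2 / 6 * ∑ j ∈ Finset.Icc 2 m, (j : ℝ) * b j ^ 2 := by rw [Finset.mul_sum]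
        _ ≤ Real.pi ^ 2 / 6 * Btil ^ 2 := by
            rw [hBt2]
            exact mul_le_mul_of_nonneg_left
              (Finset.sum_le_sum_of_subset_of_nonneg
                (Finset.Icc_subset_Icc (by omega) le_rfl) (fun k _ _ => by positivity))
              (by positivity)
    · rw [sqrt_sq_mul_sq _ _ hAt0 hB0, sqrt_pi6 _ hBt0]; exact le_of_eq (by ring)
  · -- Part 3
    refine le_trans (cs2 (Finset.Icc 2 m) (fun j => Finset.Icc 2 j)
      (fun j ℓ => ((j : ℝ) - ℓ + 1) / ℓ * (a (ℓ - 1) * b j * b (j - ℓ + 1)))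
      (fun j ℓ => Real.sqrt (j - ℓ + 1 : ℕ) * a (ℓ - 1) * b (j - ℓ + 1))
      (fun j ℓ => Real.sqrt j * b j / ℓ)
      (A ^ 2 * Btil ^ 2) (Real.pi ^ 2 / 6 * Btil ^ 2) ?_ ?_ ?_) ?_
    · intro j hj ℓ hℓ
      simp only [Finset.mem_Icc] at hj hℓ
      have hcast : ((j - ℓ + 1 : ℕ) : ℝ) = (j : ℝ) - ℓ + 1 := by
        rw [Nat.cast_add, Nat.cast_sub hℓ.2, Nat.cast_one]
      have hl0 : (0 : ℝ) < ℓ := Nat.cast_pos.mpr (by omega)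
      have hprod : 0 ≤ a (ℓ - 1) * b j * b (j - ℓ + 1) :=
        mul_nonneg (mul_nonneg (ha' _ (by omega) (by omega)) (hb' j (by omega))) (hb' _ (by omega))
      have hk : ((j - ℓ + 1 : ℕ) : ℝ) ≤ Real.sqrt (j - ℓ + 1 : ℕ) * Real.sqrt j := by
        have hkj : ((j - ℓ + 1 : ℕ) : ℝ) ≤ (j : ℝ) := by exact_mod_cast (by omega : j - ℓ + 1 ≤ j)
        calc ((j - ℓ + 1 : ℕ) : ℝ)
            = Real.sqrt (((j - ℓ + 1 : ℕ) : ℝ) * ((j - ℓ + 1 : ℕ) : ℝ)) :=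
              (Real.sqrt_mul_self (Nat.cast_nonneg _)).symm
          _ ≤ Real.sqrt (((j - ℓ + 1 : ℕ) : ℝ) * (j : ℝ)) :=
              Real.sqrt_le_sqrt (mul_le_mul_of_nonneg_left hkj (Nat.cast_nonneg _))
          _ = Real.sqrt (j - ℓ + 1 : ℕ) * Real.sqrt j :=
              Real.sqrt_mul (Nat.cast_nonneg _) _
      have e1 : Real.sqrt (j - ℓ + 1 : ℕ) * a (ℓ - 1) * b (j - ℓ + 1) * (Real.sqrt j * b j / ℓ)
          = Real.sqrt (j - ℓ + 1 : ℕ) * Real.sqrt j * (a (ℓ - 1) * b j * b (j - ℓ + 1)) / ℓ := by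
        ring
      have e2 : ((j : ℝ) - ℓ + 1) / ℓ * (a (ℓ - 1) * b j * b (j - ℓ + 1))
          = ((j - ℓ + 1 : ℕ) : ℝ) * (a (ℓ - 1) * b j * b (j - ℓ + 1)) / ℓ := by
        rw [hcast]; ring
      rw [e1, e2]
      exact div_le_div_right' (mul_le_mul_of_nonneg_right hk hprod) hl0.le
    · rw [swap_tri 2 m]
      calc ∑ ℓ ∈ Finset.Icc 2 m, ∑ j ∈ Finset.Icc ℓ m,
            (Real.sqrt (j - ℓ + 1 : ℕ) * a (ℓ - 1) * b (j - ℓ + 1)) ^ 2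
          ≤ ∑ ℓ ∈ Finset.Icc 2 m, a (ℓ - 1) ^ 2 * Btil ^ 2 := by
            refine Finset.sum_le_sum fun ℓ hℓ => ?_
            simp only [Finset.mem_Icc] at hℓ
            have e : ∀ j ∈ Finset.Icc ℓ m,
                (Real.sqrt (j - ℓ + 1 : ℕ) * a (ℓ - 1) * b (j - ℓ + 1)) ^ 2
                = a (ℓ - 1) ^ 2 * (((j - ℓ + 1 : ℕ) : ℝ) * b (j - ℓ + 1) ^ 2) := fun j _ => by
              rw [mul_pow, mul_pow, Real.sq_sqrt (Nat.cast_nonneg _)]; ring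
            rw [Finset.sum_congr rfl e, ← Finset.mul_sum]
            refine mul_le_mul_of_nonneg_left ?_ (sq_nonneg _)
            rw [hBt2]
            exact sum_comp_le (fun k => (k : ℝ) * b k ^ 2) (fun k => by positivity) _ _
              (fun j => j - ℓ + 1)
              (fun p hp q hq h => by simp only [Finset.coe_Icc, Set.mem_Icc] at hp hq; dsimp only at h; omega)
              (fun j hj => by
                simp only [Finset.mem_Icc] at hj; exact Finset.mem_Icc.mpr (by omega))
        _ ≤ A ^ 2 * Btil ^ 2 := by
            rw [← Finset.sum_mul, hA2]
            exact mul_le_mul_of_nonneg_right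
              (sum_comp_le (fun k => a k ^ 2) (fun k => sq_nonneg _) _ _ (fun ℓ => ℓ - 1)
                (fun p hp q hq h => by simp only [Finset.coe_Icc, Set.mem_Icc] at hp hq; dsimp only at h; omega)
                (fun ℓ hℓ => by
                  simp only [Finset.mem_Icc] at hℓ; exact Finset.mem_Icc.mpr (by omega)))
              (by positivity)
    · exact hy_bound m b Btil hBt2 _ (Finset.Icc_subset_Icc (by omega) le_rfl) _
    · rw [sqrt_sq_mul_sq _ _ hA0 hBt0, sqrt_pi6 _ hBt0]; exact le_of_eq (by ring)
  · -- Part 4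
    refine le_trans (cs2 (Finset.Icc 3 m) (fun j => Finset.Icc 2 (j - 1))
      (fun j ℓ => a (j - ℓ) * b j * b ℓ)
      (fun j ℓ => Real.sqrt j * b j * (Real.sqrt ℓ * b ℓ))
      (fun j ℓ => a (j - ℓ) / (Real.sqrt j * Real.sqrt ℓ))
      (Btil ^ 2 * Btil ^ 2) (Real.pi ^ 2 / 6 * A ^ 2) ?_ ?_ ?_) ?_
    · intro j hj ℓ hℓ
      simp only [Finset.mem_Icc] at hj hℓ
      have h1 : Real.sqrt j ≠ 0 := ne_of_gt (Real.sqrt_pos.mpr (Nat.cast_pos.mpr (by omega)))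
      have h2 : Real.sqrt ℓ ≠ 0 := ne_of_gt (Real.sqrt_pos.mpr (Nat.cast_pos.mpr (by omega)))
      refine le_of_eq ?_
      field_simp
    · calc ∑ j ∈ Finset.Icc 3 m, ∑ ℓ ∈ Finset.Icc 2 (j - 1),
            (Real.sqrt j * b j * (Real.sqrt ℓ * b ℓ)) ^ 2
          ≤ ∑ j ∈ Finset.Icc 3 m, (j : ℝ) * b j ^ 2 * Btil ^ 2 := by
            refine Finset.sum_le_sum fun j hj => ?_
            simp only [Finset.mem_Icc] at hj
            have e : ∀ ℓ ∈ Finset.Icc 2 (j - 1), (Real.sqrt j * b j * (Real.sqrt ℓ * b ℓ)) ^ 2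
                = (j : ℝ) * b j ^ 2 * ((ℓ : ℝ) * b ℓ ^ 2) := fun ℓ _ => by
              rw [mul_pow, mul_pow, mul_pow, Real.sq_sqrt (Nat.cast_nonneg j),
                Real.sq_sqrt (Nat.cast_nonneg ℓ)]
            rw [Finset.sum_congr rfl e, ← Finset.mul_sum]
            refine mul_le_mul_of_nonneg_left ?_ (by positivity)
            rw [hBt2]
            exact Finset.sum_le_sum_of_subset_of_nonneg
              (Finset.Icc_subset_Icc (by omega) (by omega)) (fun k _ _ => by positivity)
        _ ≤ Btil ^ 2 * Btil ^ 2 := by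
            rw [← Finset.sum_mul]
            refine mul_le_mul_of_nonneg_right ?_ (by positivity)
            rw [hBt2]
            exact Finset.sum_le_sum_of_subset_of_nonneg
              (Finset.Icc_subset_Icc (by omega) le_rfl) (fun k _ _ => by positivity)
    · calc ∑ j ∈ Finset.Icc 3 m, ∑ ℓ ∈ Finset.Icc 2 (j - 1),
            (a (j - ℓ) / (Real.sqrt j * Real.sqrt ℓ)) ^ 2
          ≤ ∑ j ∈ Finset.Icc 3 m, ∑ ℓ ∈ Finset.Icc 2 (j - 1), 1 / (ℓ : ℝ) ^ 2 * a (j - ℓ) ^ 2 := by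
            refine Finset.sum_le_sum fun j hj => Finset.sum_le_sum fun ℓ hℓ => ?_
            simp only [Finset.mem_Icc] at hj hℓ
            have hl0 : (0 : ℝ) < (ℓ : ℝ) := Nat.cast_pos.mpr (by omega)
            have hlj : (ℓ : ℝ) ≤ (j : ℝ) := by exact_mod_cast (by omega : ℓ ≤ j)
            have e : (a (j - ℓ) / (Real.sqrt j * Real.sqrt ℓ)) ^ 2
                = a (j - ℓ) ^ 2 * (1 / ((j : ℝ) * ℓ)) := by
              rw [div_pow, mul_pow, Real.sq_sqrt (Nat.cast_nonneg j),
                Real.sq_sqrt (Nat.cast_nonneg ℓ)]; ring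
            rw [e]
            have h1 : 1 / ((j : ℝ) * ℓ) ≤ 1 / (ℓ : ℝ) ^ 2 := by
              apply one_div_le_one_div_of_le (by positivity)
              nlinarith
            calc a (j - ℓ) ^ 2 * (1 / ((j : ℝ) * ℓ)) ≤ a (j - ℓ) ^ 2 * (1 / (ℓ : ℝ) ^ 2) :=
                mul_le_mul_of_nonneg_left h1 (sq_nonneg _)
              _ = 1 / (ℓ : ℝ) ^ 2 * a (j - ℓ) ^ 2 := by ring
        _ = ∑ ℓ ∈ Finset.Icc 2 m, ∑ j ∈ Finset.Icc (ℓ + 1) m, 1 / (ℓ : ℝ) ^ 2 * a (j - ℓ) ^ 2 :=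
            swap_tri' m _
        _ ≤ ∑ ℓ ∈ Finset.Icc 2 m, 1 / (ℓ : ℝ) ^ 2 * A ^ 2 := by
            refine Finset.sum_le_sum fun ℓ hℓ => ?_
            simp only [Finset.mem_Icc] at hℓ
            rw [← Finset.mul_sum]
            refine mul_le_mul_of_nonneg_left ?_ (by positivity)
            rw [hA2]
            exact sum_comp_le (fun k => a k ^ 2) (fun k => sq_nonneg _) _ _ (fun j => j - ℓ)
              (fun p hp q hq h => by simp only [Finset.coe_Icc, Set.mem_Icc] at hp hq; dsimp only at h; omega)
              (fun j hj => by
                simp only [Finset.mem_Icc] at hj; exact Finset.mem_Icc.mpr (by omega))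
        _ = (∑ ℓ ∈ Finset.Icc 2 m, 1 / (ℓ : ℝ) ^ 2) * A ^ 2 := by rw [Finset.sum_mul]
        _ ≤ Real.pi ^ 2 / 6 * A ^ 2 := mul_le_mul_of_nonneg_right (basel _) (by positivity)
    · rw [sqrt_sq_mul_sq _ _ hBt0 hBt0, sqrt_pi6 _ hA0]; exact le_of_eq (by ring)
  · -- Part 5
    refine le_trans (cs2 (Finset.Icc 3 m) (fun j => Finset.Icc 2 (j - 1))
      (fun j ℓ => ((j : ℝ) - ℓ + 1) / ℓ * (a (j - ℓ + 1) * b j * b (ℓ - 1)))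
      (fun j ℓ => Real.sqrt (j - ℓ + 1 : ℕ) * a (j - ℓ + 1) * b (ℓ - 1))
      (fun j ℓ => Real.sqrt j * b j / ℓ)
      (Atil ^ 2 * B ^ 2) (Real.pi ^ 2 / 6 * Btil ^ 2) ?_ ?_ ?_) ?_
    · intro j hj ℓ hℓ
      simp only [Finset.mem_Icc] at hj hℓ
      have hcast : ((j - ℓ + 1 : ℕ) : ℝ) = (j : ℝ) - ℓ + 1 := by
        rw [Nat.cast_add, Nat.cast_sub (by omega), Nat.cast_one]
      have hl0 : (0 : ℝ) < ℓ := Nat.cast_pos.mpr (by omega)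
      have hprod : 0 ≤ a (j - ℓ + 1) * b j * b (ℓ - 1) :=
        mul_nonneg (mul_nonneg (ha' _ (by omega) (by omega)) (hb' j (by omega))) (hb' _ (by omega))
      have hk : ((j - ℓ + 1 : ℕ) : ℝ) ≤ Real.sqrt (j - ℓ + 1 : ℕ) * Real.sqrt j := by
        have hkj : ((j - ℓ + 1 : ℕ) : ℝ) ≤ (j : ℝ) := by exact_mod_cast (by omega : j - ℓ + 1 ≤ j)
        calc ((j - ℓ + 1 : ℕ) : ℝ)
            = Real.sqrt (((j - ℓ + 1 : ℕ) : ℝ) * ((j - ℓ + 1 : ℕ) : ℝ)) :=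
              (Real.sqrt_mul_self (Nat.cast_nonneg _)).symm
          _ ≤ Real.sqrt (((j - ℓ + 1 : ℕ) : ℝ) * (j : ℝ)) :=
              Real.sqrt_le_sqrt (mul_le_mul_of_nonneg_left hkj (Nat.cast_nonneg _))
          _ = Real.sqrt (j - ℓ + 1 : ℕ) * Real.sqrt j :=
              Real.sqrt_mul (Nat.cast_nonneg _) _
      have e1 : Real.sqrt (j - ℓ + 1 : ℕ) * a (j - ℓ + 1) * b (ℓ - 1) * (Real.sqrt j * b j / ℓ)
          = Real.sqrt (j - ℓ + 1 : ℕ) * Real.sqrt j * (a (j - ℓ + 1) * b j * b (ℓ - 1)) / ℓ := by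
        ring
      have e2 : ((j : ℝ) - ℓ + 1) / ℓ * (a (j - ℓ + 1) * b j * b (ℓ - 1))
          = ((j - ℓ + 1 : ℕ) : ℝ) * (a (j - ℓ + 1) * b j * b (ℓ - 1)) / ℓ := by
        rw [hcast]; ring
      rw [e1, e2]
      exact div_le_div_right' (mul_le_mul_of_nonneg_right hk hprod) hl0.le
    · rw [swap_tri' m]
      calc ∑ ℓ ∈ Finset.Icc 2 m, ∑ j ∈ Finset.Icc (ℓ + 1) m,
            (Real.sqrt (j - ℓ + 1 : ℕ) * a (j - ℓ + 1) * b (ℓ - 1)) ^ 2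
          ≤ ∑ ℓ ∈ Finset.Icc 2 m, b (ℓ - 1) ^ 2 * Atil ^ 2 := by
            refine Finset.sum_le_sum fun ℓ hℓ => ?_
            simp only [Finset.mem_Icc] at hℓ
            have e : ∀ j ∈ Finset.Icc (ℓ + 1) m,
                (Real.sqrt (j - ℓ + 1 : ℕ) * a (j - ℓ + 1) * b (ℓ - 1)) ^ 2
                = b (ℓ - 1) ^ 2 * (((j - ℓ + 1 : ℕ) : ℝ) * a (j - ℓ + 1) ^ 2) := fun j _ => by
              rw [mul_pow, mul_pow, Real.sq_sqrt (Nat.cast_nonneg _)]; ring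
            rw [Finset.sum_congr rfl e, ← Finset.mul_sum]
            refine mul_le_mul_of_nonneg_left ?_ (sq_nonneg _)
            rw [hAt2]
            exact sum_comp_le (fun k => (k : ℝ) * a k ^ 2) (fun k => by positivity) _ _
              (fun j => j - ℓ + 1)
              (fun p hp q hq h => by simp only [Finset.coe_Icc, Set.mem_Icc] at hp hq; dsimp only at h; omega)
              (fun j hj => by
                simp only [Finset.mem_Icc] at hj; exact Finset.mem_Icc.mpr (by omega))
        _ ≤ B ^ 2 * Atil ^ 2 := by
            rw [← Finset.sum_mul]
            refine mul_le_mul_of_nonneg_right ?_ (by positivity)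
            rw [hB2]
            exact sum_comp_le (fun k => b k ^ 2) (fun k => sq_nonneg _) _ _ (fun ℓ => ℓ - 1)
              (fun p hp q hq h => by simp only [Finset.coe_Icc, Set.mem_Icc] at hp hq; dsimp only at h; omega)
              (fun ℓ hℓ => by
                simp only [Finset.mem_Icc] at hℓ; exact Finset.mem_range.mpr (by omega))
        _ = Atil ^ 2 * B ^ 2 := mul_comm _ _
    · exact hy_bound m b Btil hBt2 _ (Finset.Icc_subset_Icc (by omega) le_rfl) _
    · rw [sqrt_sq_mul_sq _ _ hAt0 hB0, sqrt_pi6 _ hBt0]; exact le_of_eq (by ring)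

end GCH
end
end
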